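/- arXiv:0812.1251 — 7 statements merged into one kernel-verified Lean document; each statement's English description precedes it below -/
import Mathlib

section
/- Let m and n be non-negative integers and let x_1,…,x_n be nonzero complex numbers such that the 2n numbers x_1, x_1^{-1}, …, x_n, x_n^{-1} are pairwise distinct (this guarantees that all denominator determinants below are nonzero). Then s_{((2m)^n)}(x_1, x_1^{-1}, x_2, x_2^{-1}, …, x_n, x_n^{-1}) = (−1)^{mn} · so_{(m^n)}(x_1,…,x_n) · so_{(m^n)}(−x_1,…,−x_n), where so_{(m^n)}(−x_1,…,−x_n) is computed from the determinant formula using any fixed square roots z_i with z_i^2 = −x_i (the value is independent of this choice). -/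
open Matrix Finset

/-- The `2n` variables `x₁, x₁⁻¹, x₂, x₂⁻¹, …, xₙ, xₙ⁻¹`. -/
noncomputable def pairVars {n : ℕ} (x : Fin n → ℂ) : Fin (2 * n) → ℂ :=
  fun i =>
    if (i : ℕ) % 2 = 0 then x ⟨(i : ℕ) / 2, by have := i.isLt; omega⟩
    else (x ⟨(i : ℕ) / 2, by have := i.isLt; omega⟩)⁻¹
/-- The Schur function `s_λ(x₁,…,x_N)` as a ratio of determinants,
for an integer shape `lam` (indexed by `Fin N`, i.e. 0-based). -/
noncomputable def schurChar {N : ℕ} (lam : Fin N → ℤ) (x : Fin N → ℂ) : ℂ :=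
  Matrix.det (Matrix.of fun h t : Fin N =>
      x h ^ (lam t + (N : ℤ) - 1 - ((t : ℕ) : ℤ))) /
    Matrix.det (Matrix.of fun h t : Fin N => x h ^ ((N : ℤ) - 1 - ((t : ℕ) : ℤ)))
/-- The odd orthogonal character `so_λ(x₁,…,x_N)` with *doubled* shape
`lam2 = 2·λ` (so that half-integer shapes are allowed), computed from fixed
square roots `y` of the variables (`y i ^ 2 = x i`). -/
noncomputable def soChar2 {N : ℕ} (lam2 : Fin N → ℤ) (y : Fin N → ℂ) : ℂ :=
  Matrix.det (Matrix.of fun h t : Fin N =>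
      y h ^ (lam2 t + 2 * ((N : ℤ) - 1 - ((t : ℕ) : ℤ)) + 1) -
        y h ^ (-(lam2 t + 2 * ((N : ℤ) - 1 - ((t : ℕ) : ℤ)) + 1))) /
    Matrix.det (Matrix.of fun h t : Fin N =>
      y h ^ (2 * ((N : ℤ) - 1 - ((t : ℕ) : ℤ)) + 1) -
        y h ^ (-(2 * ((N : ℤ) - 1 - ((t : ℕ) : ℤ)) + 1)))

namespace SchurAux

def rowF (n : ℕ) : Fin n ⊕ Fin n → Fin (2 * n) :=
  Sum.elim (fun i => ⟨2 * i.1, by have := i.2; omega⟩)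
    (fun i => ⟨2 * i.1 + 1, by have := i.2; omega⟩)

def colF (n : ℕ) : Fin n ⊕ Fin n → Fin (2 * n) :=
  Sum.elim (fun t => ⟨t.1, by have := t.2; omega⟩)
    (fun s => ⟨2 * n - 1 - s.1, by have := s.2; omega⟩)

lemma rowF_bij (n : ℕ) : Function.Bijective (rowF n) := by
  rw [Fintype.bijective_iff_injective_and_card]
  constructor
  · rintro (a | a) (b | b) h <;>
      simp only [rowF, Sum.elim_inl, Sum.elim_inr, Fin.mk.injEq] at h <;>
      first
        | (congr 1; exact Fin.ext (by omega))
        | omega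
  · simp; omega

lemma colF_bij (n : ℕ) : Function.Bijective (colF n) := by
  rw [Fintype.bijective_iff_injective_and_card]
  constructor
  · rintro (a | a) (b | b) h <;>
      simp only [colF, Sum.elim_inl, Sum.elim_inr, Fin.mk.injEq] at h <;>
      first
        | (congr 1; exact Fin.ext (by have := a.2; have := b.2; omega))
        | (exfalso; have := a.2; have := b.2; omega)
  · simp; omega

noncomputable def rowE (n : ℕ) : Fin n ⊕ Fin n ≃ Fin (2 * n) := Equiv.ofBijective _ (rowF_bij n)
noncomputable def colE (n : ℕ) : Fin n ⊕ Fin n ≃ Fin (2 * n) := Equiv.ofBijective _ (colF_bij n)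

@[simp] lemma rowE_inl_val (n : ℕ) (i : Fin n) : ((rowE n) (Sum.inl i) : ℕ) = 2 * i.1 := rfl
@[simp] lemma rowE_inr_val (n : ℕ) (i : Fin n) : ((rowE n) (Sum.inr i) : ℕ) = 2 * i.1 + 1 := rfl
@[simp] lemma colE_inl_val (n : ℕ) (t : Fin n) : ((colE n) (Sum.inl t) : ℕ) = t.1 := rfl
@[simp] lemma colE_inr_val (n : ℕ) (s : Fin n) : ((colE n) (Sum.inr s) : ℕ) = 2 * n - 1 - s.1 := rfl

noncomputable def sgn (n : ℕ) : ℂ :=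
  ((Equiv.Perm.sign ((colE n).trans (rowE n).symm) : ℤ) : ℂ)

lemma sgn_sq (n : ℕ) : sgn n * sgn n = 1 := by
  unfold sgn
  rcases Int.units_eq_one_or (Equiv.Perm.sign ((colE n).trans (rowE n).symm)) with h | h <;>
    rw [h] <;> norm_num

lemma sgn_ne (n : ℕ) : sgn n ≠ 0 := by
  intro h
  have := sgn_sq n
  rw [h, mul_zero] at this
  exact zero_ne_one this

lemma det_reindex {n : ℕ} (M : Matrix (Fin (2*n)) (Fin (2*n)) ℂ) :
    M.det = sgn n * (M.submatrix (rowE n) (colE n)).det := by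
  have h1 : M.submatrix (rowE n) (colE n)
      = (M.submatrix (rowE n) (rowE n)).submatrix id ((colE n).trans (rowE n).symm) := by
    ext i j
    simp [Matrix.submatrix_apply]
  have h2 : (M.submatrix (rowE n) (colE n)).det = sgn n * M.det := by
    rw [h1, Matrix.det_permute', Matrix.det_submatrix_equiv_self]
    norm_num [sgn]
  rw [h2, ← mul_assoc, sgn_sq, one_mul]

lemma det_fromBlocks_AB {n : ℕ} (A B : Matrix (Fin n) (Fin n) ℂ) :
    (Matrix.fromBlocks A B B A).det = (A + B).det * (A - B).det := by
  have key : Matrix.fromBlocks A B B A * Matrix.fromBlocks (1 : Matrix (Fin n) (Fin n) ℂ) 0 1 1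
      = Matrix.fromBlocks 1 0 1 1 * Matrix.fromBlocks (A + B) B 0 (A - B) := by
    rw [Matrix.fromBlocks_multiply, Matrix.fromBlocks_multiply]
    congr 1 <;> simp <;> abel
  have h := congrArg Matrix.det key
  rw [Matrix.det_mul, Matrix.det_mul, Matrix.det_fromBlocks_zero₁₂, Matrix.det_fromBlocks_zero₂₁] at h
  simpa using h

lemma pairVars_even {n : ℕ} (x : Fin n → ℂ) (j : Fin (2*n)) (i : Fin n)
    (h : (j : ℕ) = 2 * i.1) : pairVars x j = x i := by
  unfold pairVars
  rw [if_pos (by omega)]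
  exact congrArg x (Fin.ext (show (j:ℕ)/2 = (i:ℕ) by omega))

lemma pairVars_odd {n : ℕ} (x : Fin n → ℂ) (j : Fin (2*n)) (i : Fin n)
    (h : (j : ℕ) = 2 * i.1 + 1) : pairVars x j = (x i)⁻¹ := by
  unfold pairVars
  rw [if_neg (by omega)]
  exact congrArg (fun k => (x k)⁻¹) (Fin.ext (show (j:ℕ)/2 = (i:ℕ) by omega))

end SchurAux

namespace SchurAux

lemma core {n : ℕ} (x y : Fin n → ℂ) (hy : ∀ i, y i ^ 2 = x i) (hyne : ∀ i, y i ≠ 0)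
    (a : Fin (2*n) → ℤ) (c2 : ℤ) (K : Fin n → ℤ)
    (ha1 : ∀ (t : Fin n) (T : Fin (2*n)), (T : ℕ) = (t : ℕ) → 2 * a T = c2 + K t)
    (ha2 : ∀ (s : Fin n) (T : Fin (2*n)), (T : ℕ) = 2*n - 1 - (s : ℕ) → 2 * a T = c2 - K s) :
    (Matrix.of fun h t : Fin (2*n) => pairVars x h ^ a t).det
      = sgn n * ((Matrix.of fun i t : Fin n => y i ^ K t + y i ^ (-K t)).det *
          (Matrix.of fun i t : Fin n => y i ^ K t - y i ^ (-K t)).det) := by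
  have hpow : ∀ (i : Fin n) (c : ℤ), x i ^ c = y i ^ (2 * c) := by
    intro i c
    rw [← hy i, show (2:ℤ) = ((2:ℕ):ℤ) by norm_num, _root_.zpow_mul, zpow_natCast]
  have hpowinv : ∀ (i : Fin n) (c : ℤ), (x i)⁻¹ ^ c = y i ^ (-(2 * c)) := by
    intro i c
    rw [_root_.inv_zpow, ← _root_.zpow_neg, hpow i (-c)]
    ring_nf
  set A : Matrix (Fin n) (Fin n) ℂ := Matrix.of fun i t => y i ^ K t with hA
  set B : Matrix (Fin n) (Fin n) ℂ := Matrix.of fun i t => y i ^ (-K t) with hB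
  have hM : (Matrix.of fun h t : Fin (2*n) => pairVars x h ^ a t).submatrix (rowE n) (colE n)
      = Matrix.diagonal (Sum.elim (fun i : Fin n => y i ^ c2) (fun i : Fin n => y i ^ (-c2)))
          * Matrix.fromBlocks A B B A := by
    ext i j
    rw [Matrix.diagonal_mul, Matrix.submatrix_apply]
    rcases i with i | i <;> rcases j with t | t <;>
      simp only [Sum.elim_inl, Sum.elim_inr, Matrix.of_apply,
        Matrix.fromBlocks_apply₁₁, Matrix.fromBlocks_apply₁₂,
        Matrix.fromBlocks_apply₂₁, Matrix.fromBlocks_apply₂₂, hA, hB]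
    · rw [pairVars_even x _ i rfl, hpow i, show 2 * a ((colE n) (Sum.inl t)) = c2 + K t from
        ha1 t _ (colE_inl_val n t), zpow_add₀ (hyne i)]
    · rw [pairVars_even x _ i rfl, hpow i, show 2 * a ((colE n) (Sum.inr t)) = c2 - K t from
        ha2 t _ (colE_inr_val n t), sub_eq_add_neg, zpow_add₀ (hyne i)]
    · rw [pairVars_odd x _ i rfl, hpowinv i, show 2 * a ((colE n) (Sum.inl t)) = c2 + K t from
        ha1 t _ (colE_inl_val n t), neg_add, zpow_add₀ (hyne i)]
    · rw [pairVars_odd x _ i rfl, hpowinv i, show 2 * a ((colE n) (Sum.inr t)) = c2 - K t from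
        ha2 t _ (colE_inr_val n t), neg_sub', sub_eq_add_neg, zpow_add₀ (hyne i), neg_neg]
  rw [det_reindex (Matrix.of fun h t : Fin (2*n) => pairVars x h ^ a t), hM, Matrix.det_mul,
    Matrix.det_diagonal, det_fromBlocks_AB, Fintype.prod_sum_type]
  simp only [Sum.elim_inl, Sum.elim_inr]
  rw [← Finset.prod_mul_distrib]
  have : ∀ i : Fin n, y i ^ c2 * y i ^ (-c2) = 1 := by
    intro i
    rw [← zpow_add₀ (hyne i)]
    simp
  simp only [this, Finset.prod_const_one, one_mul]
  have hAB : A + B = Matrix.of fun i t : Fin n => y i ^ K t + y i ^ (-K t) := by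
    ext i t; simp [hA, hB]
  have hAB' : A - B = Matrix.of fun i t : Fin n => y i ^ K t - y i ^ (-K t) := by
    ext i t; simp [hA, hB]
  rw [hAB, hAB']

end SchurAux

namespace SchurAux

lemma zdet {n : ℕ} (y z : Fin n → ℂ) (hyne : ∀ i, y i ≠ 0) (hz2 : ∀ i, z i ^ 2 = - y i ^ 2)
    (K : Fin n → ℤ) (M : Fin n → ℕ) (hK : ∀ t, K t = 2 * (M t : ℤ) + 1) :
    (Matrix.of fun i t : Fin n => z i ^ K t - z i ^ (-K t)).det
      = (∏ i, z i / y i) * ((∏ t, (-1 : ℂ) ^ M t) *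
        (Matrix.of fun i t : Fin n => y i ^ K t + y i ^ (-K t)).det) := by
  have key : ∀ (i t : Fin n), z i ^ K t - z i ^ (-K t)
      = (z i / y i) * ((-1 : ℂ) ^ M t * (y i ^ K t + y i ^ (-K t))) := by
    intro i t
    set w : ℂ := z i / y i with hwdef
    have hw : w ^ 2 = -1 := by
      rw [hwdef, div_pow, hz2 i, neg_div, div_self (pow_ne_zero 2 (hyne i))]
    have hwne : w ≠ 0 := by
      intro h; rw [h] at hw; norm_num at hw
    have hzw : z i = w * y i := (div_mul_cancel₀ (z i) (hyne i)).symm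
    have h2z : w ^ (2:ℤ) = -1 := by
      rw [show (2:ℤ) = ((2:ℕ):ℤ) by norm_num, zpow_natCast, hw]
    have hwK : w ^ K t = (-1 : ℂ) ^ M t * w := by
      rw [hK t, zpow_add_one₀ hwne, _root_.zpow_mul, h2z, ← zpow_natCast (-1 : ℂ) (M t)]
    have hww : w * -w = 1 := by
      have : w * w = -1 := by rw [← sq]; exact hw
      rw [mul_neg, this, neg_neg]
    have hsq : ((-1:ℂ) ^ M t) * ((-1:ℂ) ^ M t) = 1 := by
      rw [← pow_add, ← two_mul, pow_mul, neg_one_sq, one_pow]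
    have hprod : ((-1:ℂ) ^ M t * w) * ((-1:ℂ) ^ M t * -w) = 1 := by
      calc ((-1:ℂ) ^ M t * w) * ((-1:ℂ) ^ M t * -w)
          = (((-1:ℂ) ^ M t) * ((-1:ℂ) ^ M t)) * (w * -w) := by ring
        _ = 1 := by rw [hsq, hww, mul_one]
    have hwKn : w ^ (-K t) = (-1 : ℂ) ^ M t * -w := by
      rw [_root_.zpow_neg, hwK]
      exact inv_eq_of_mul_eq_one_right hprod
    have hzK : ∀ c : ℤ, z i ^ c = w ^ c * y i ^ c := by
      intro c; rw [hzw, mul_zpow]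
    rw [hzK, hzK, hwK, hwKn, hwdef]
    ring
  set E : Matrix (Fin n) (Fin n) ℂ := Matrix.of fun i t : Fin n => y i ^ K t + y i ^ (-K t) with hE
  set F : Matrix (Fin n) (Fin n) ℂ := Matrix.of fun i t : Fin n => (-1 : ℂ) ^ M t * E i t with hF
  have step1 : (Matrix.of fun i t : Fin n => z i ^ K t - z i ^ (-K t))
      = Matrix.of fun i t : Fin n => (z i / y i) * F i t := by
    ext i t
    simp only [Matrix.of_apply, hF, hE]
    exact key i t
  rw [step1, Matrix.det_mul_column (fun i => z i / y i) F, hF,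
    Matrix.det_mul_row (fun t => (-1 : ℂ) ^ M t) E]

end SchurAux

namespace SchurAux

lemma final_alg (s E r c p q p0 q0 : ℂ) (hs : s * s = 1) (hE : E * E = 1)
    (hr : r ≠ 0) (hc : c ≠ 0) :
    s * (p * q) / (s * (p0 * q0)) = E * (q / q0) * (r * ((E * c) * p) / (r * (c * p0))) := by
  have hs0 : s ≠ 0 := by intro h; rw [h, mul_zero] at hs; exact zero_ne_one hs
  rw [mul_div_mul_left _ _ hs0]
  have h1 : r * ((E * c) * p) / (r * (c * p0)) = (E * p) / p0 := by
    rw [show r * ((E * c) * p) = (r * c) * (E * p) by ring,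
      show r * (c * p0) = (r * c) * p0 by ring,
      mul_div_mul_left _ _ (mul_ne_zero hr hc)]
  rw [h1]
  have h2 : E * (q / q0) * ((E * p) / p0) = (E * E) * (p * q / (p0 * q0)) := by
    ring
  rw [h2, hE, one_mul]

end SchurAux

/-- **Theorem 1 (even case).**  For non-negative integers `m, n` and nonzero
complex numbers `x₁,…,xₙ` such that `x₁, x₁⁻¹, …, xₙ, xₙ⁻¹` are pairwise
distinct, with fixed square roots `y i` of `x i` and `z i` of `-x i`,
`s_{((2m)^n)}(x₁,x₁⁻¹,…,xₙ,xₙ⁻¹)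
  = (-1)^{mn} · so_{(m^n)}(x₁,…,xₙ) · so_{(m^n)}(-x₁,…,-xₙ)`. -/
theorem schur_even_rectangle_factorization
    (m n : ℕ) (x y z : Fin n → ℂ) (hx : ∀ i, x i ≠ 0)
    (hy : ∀ i, y i ^ 2 = x i) (hz : ∀ i, z i ^ 2 = -x i)
    (hdist : Function.Injective (pairVars x)) :
    schurChar (fun t : Fin (2 * n) => if (t : ℕ) < n then (2 * m : ℤ) else 0)
        (pairVars x) =
      (-1 : ℂ) ^ (m * n) * soChar2 (fun _ => (2 * m : ℤ)) y *
        soChar2 (fun _ => (2 * m : ℤ)) z := by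
  have hyne : ∀ i, y i ≠ 0 := fun i h => hx i (by rw [← hy i, h]; ring)
  have hzne : ∀ i, z i ≠ 0 := fun i h => hx i (by have := hz i; rw [h] at this; simpa using this.symm)
  have hz2 : ∀ i, z i ^ 2 = - y i ^ 2 := fun i => by rw [hz i, hy i]
  have En : (Matrix.of fun h t : Fin (2*n) => pairVars x h ^
        ((if (t:ℕ) < n then 2 * (m:ℤ) else 0) + ((2 * n : ℕ) : ℤ) - 1 - ((t:ℕ):ℤ))).det
      = SchurAux.sgn n *
        ((Matrix.of fun i t : Fin n => y i ^ (2*(m:ℤ) + 2*((n:ℤ) - 1 - ((t:ℕ):ℤ)) + 1)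
            + y i ^ (-(2*(m:ℤ) + 2*((n:ℤ) - 1 - ((t:ℕ):ℤ)) + 1))).det *
         (Matrix.of fun i t : Fin n => y i ^ (2*(m:ℤ) + 2*((n:ℤ) - 1 - ((t:ℕ):ℤ)) + 1)
            - y i ^ (-(2*(m:ℤ) + 2*((n:ℤ) - 1 - ((t:ℕ):ℤ)) + 1))).det) :=
    SchurAux.core x y hy hyne _ (2*(m:ℤ) + 2*(n:ℤ) - 1) _
      (by intro t T hT; have := t.2; rw [if_pos (show (T:ℕ) < n by omega)]; omega)
      (by intro s T hT; have := s.2; have := T.2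
          rw [if_neg (show ¬ (T:ℕ) < n by omega)]; omega)
  have Ed : (Matrix.of fun h t : Fin (2*n) => pairVars x h ^
        (((2 * n : ℕ) : ℤ) - 1 - ((t:ℕ):ℤ))).det
      = SchurAux.sgn n *
        ((Matrix.of fun i t : Fin n => y i ^ (2*((n:ℤ) - 1 - ((t:ℕ):ℤ)) + 1)
            + y i ^ (-(2*((n:ℤ) - 1 - ((t:ℕ):ℤ)) + 1))).det *
         (Matrix.of fun i t : Fin n => y i ^ (2*((n:ℤ) - 1 - ((t:ℕ):ℤ)) + 1)
            - y i ^ (-(2*((n:ℤ) - 1 - ((t:ℕ):ℤ)) + 1))).det) :=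
    SchurAux.core x y hy hyne _ (2*(n:ℤ) - 1) _
      (by intro t T hT; have := t.2; omega)
      (by intro s T hT; have := s.2; have := T.2; omega)
  have hC : (∏ t : Fin n, (-1:ℂ) ^ (m + (n - 1 - (t:ℕ))))
      = (-1:ℂ)^(m*n) * ∏ t : Fin n, (-1:ℂ) ^ (n - 1 - (t:ℕ)) := by
    calc (∏ t : Fin n, (-1:ℂ) ^ (m + (n - 1 - (t:ℕ))))
        = ∏ t : Fin n, ((-1:ℂ) ^ m * (-1:ℂ) ^ (n - 1 - (t:ℕ))) := by
          exact Finset.prod_congr rfl fun t _ => pow_add (-1:ℂ) m (n - 1 - (t:ℕ))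
      _ = (∏ _t : Fin n, (-1:ℂ) ^ m) * ∏ t : Fin n, (-1:ℂ) ^ (n - 1 - (t:ℕ)) :=
          Finset.prod_mul_distrib
      _ = (-1:ℂ)^(m*n) * ∏ t : Fin n, (-1:ℂ) ^ (n - 1 - (t:ℕ)) := by
          rw [Finset.prod_const, Finset.card_univ, Fintype.card_fin, ← pow_mul]
  have Ezm : (Matrix.of fun h t : Fin n => z h ^ (2*(m:ℤ) + 2*((n:ℤ) - 1 - ((t:ℕ):ℤ)) + 1)
        - z h ^ (-(2*(m:ℤ) + 2*((n:ℤ) - 1 - ((t:ℕ):ℤ)) + 1))).det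
      = (∏ i, z i / y i) * (((-1:ℂ)^(m*n) * ∏ t : Fin n, (-1:ℂ) ^ (n - 1 - (t:ℕ))) *
          (Matrix.of fun i t : Fin n => y i ^ (2*(m:ℤ) + 2*((n:ℤ) - 1 - ((t:ℕ):ℤ)) + 1)
            + y i ^ (-(2*(m:ℤ) + 2*((n:ℤ) - 1 - ((t:ℕ):ℤ)) + 1))).det) := by
    rw [← hC]
    exact SchurAux.zdet y z hyne hz2 _ (fun t : Fin n => m + (n - 1 - (t:ℕ)))
      (fun t => by have := t.2; omega)
  have Ezd : (Matrix.of fun h t : Fin n => z h ^ (2*((n:ℤ) - 1 - ((t:ℕ):ℤ)) + 1)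
        - z h ^ (-(2*((n:ℤ) - 1 - ((t:ℕ):ℤ)) + 1))).det
      = (∏ i, z i / y i) * ((∏ t : Fin n, (-1:ℂ) ^ (n - 1 - (t:ℕ))) *
          (Matrix.of fun i t : Fin n => y i ^ (2*((n:ℤ) - 1 - ((t:ℕ):ℤ)) + 1)
            + y i ^ (-(2*((n:ℤ) - 1 - ((t:ℕ):ℤ)) + 1))).det) :=
    SchurAux.zdet y z hyne hz2 _ (fun t : Fin n => n - 1 - (t:ℕ))
      (fun t => by have := t.2; omega)
  have hE2 : (-1:ℂ)^(m*n) * (-1:ℂ)^(m*n) = 1 := by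
    rw [← pow_add, ← two_mul, pow_mul, neg_one_sq, one_pow]
  have hr : (∏ i, z i / y i) ≠ 0 :=
    Finset.prod_ne_zero_iff.mpr fun i _ => div_ne_zero (hzne i) (hyne i)
  have hc : (∏ t : Fin n, (-1:ℂ) ^ (n - 1 - (t:ℕ))) ≠ 0 :=
    Finset.prod_ne_zero_iff.mpr fun t _ => pow_ne_zero _ (by norm_num)
  simp only [schurChar, soChar2]
  rw [En, Ed, Ezm, Ezd]
  exact SchurAux.final_alg _ _ _ _ _ _ _ _ (SchurAux.sgn_sq n) hE2 hr hc
end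

section
/- Let m and n be non-negative integers with n ≥ 1 and let x_1,…,x_n be nonzero complex numbers such that the 2n numbers x_1, x_1^{-1}, …, x_n, x_n^{-1} are pairwise distinct (this guarantees that all denominator determinants below are nonzero). Then s_{((2m)^n)}(x_1, x_1^{-1}, …, x_n, x_n^{-1}) + s_{((2m)^{n-1})}(x_1, x_1^{-1}, …, x_n, x_n^{-1}) = sp_{(m^n)}(x_1,…,x_n) · o^{even}_{(m^n)}(x_1,…,x_n), where both Schur functions are in the 2n variables x_1, x_1^{-1}, …, x_n, x_n^{-1} (the shape ((2m)^{n-1}) is padded with a final part equal to 0). -/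
open Matrix Finset

/-- The symplectic character `sp_λ(x₁,…,x_N)` as a ratio of determinants,
for an integer shape `lam` (indexed by `Fin N`, i.e. 0-based). -/
noncomputable def spChar {N : ℕ} (lam : Fin N → ℤ) (x : Fin N → ℂ) : ℂ :=
  Matrix.det (Matrix.of fun h t : Fin N =>
      x h ^ (lam t + (N : ℤ) - ((t : ℕ) : ℤ)) -
        x h ^ (-(lam t + (N : ℤ) - ((t : ℕ) : ℤ)))) /
    Matrix.det (Matrix.of fun h t : Fin N =>
      x h ^ ((N : ℤ) - ((t : ℕ) : ℤ)) - x h ^ (-((N : ℤ) - ((t : ℕ) : ℤ))))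
/-- The even orthogonal character `o^even_λ(x₁,…,x_N)` for an integer shape
`lam`, computed directly from the variables. -/
noncomputable def oevenChar {N : ℕ} (lam : Fin N → ℤ) (x : Fin N → ℂ) : ℂ :=
  2 * Matrix.det (Matrix.of fun h t : Fin N =>
      x h ^ (lam t + (N : ℤ) - 1 - ((t : ℕ) : ℤ)) +
        x h ^ (-(lam t + (N : ℤ) - 1 - ((t : ℕ) : ℤ)))) /
    Matrix.det (Matrix.of fun h t : Fin N =>
      x h ^ ((N : ℤ) - 1 - ((t : ℕ) : ℤ)) + x h ^ (-((N : ℤ) - 1 - ((t : ℕ) : ℤ))))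

/-!
Let `y` be the `2n` variables `x₁, x₁⁻¹, …, xₙ, xₙ⁻¹`. Stacking the alternants
`A = (x^b + x^(-b))` and `B = (x^c - x^(-c))` as `[[A, B], [A, -B]]` gives the matrix with columns
`y^b + y^(-b)` and `y^c - y^(-c)`, of determinant `(-2)^n det A det B`. For a rectangle `m^n` the
exponents of `A` and `B` agree up to relabelling, except for `k = m` in `A` and `k + n` in `B`.
A pair of columns `y^e ± y^(-e)` may be replaced by `y^e, y^(-e)` at the cost of a factor `-2`.
Expanding the column `y^(k+n) - y^(-(k+n))`, inverting the variables turns the term with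
`y^(k+n)` into minus the other one. What remains is `y^k + y^(-k)` among monomial columns: the sum
of the two Schur alternants, each row divided by `y^(k+n)`, which leaves the determinant unchanged
because the product of all the `y` is `1`.
-/

variable {𝕜 : Type*} [Field 𝕜]

section Alternant

variable {ι : Type*}

def alternant (z : ι → 𝕜) (e : ι → ℤ) : Matrix ι ι 𝕜 :=
  of fun i j => z i ^ e j

theorem alternant_update [DecidableEq ι] (z : ι → 𝕜) (e : ι → ℤ) (j : ι) (v : ℤ) :
    alternant z (Function.update e j v) = (alternant z e).updateCol j fun i => z i ^ v := by
  ext i l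
  by_cases h : l = j
  · subst h; simp [alternant]
  · simp [alternant, h]

theorem det_alternant_comp [Fintype ι] [DecidableEq ι] (z : ι → 𝕜) (e : ι → ℤ)
    (σ : Equiv.Perm ι) :
    det (alternant z (e ∘ σ)) = Equiv.Perm.sign σ * det (alternant z e) :=
  det_permute' σ (alternant z e)

end Alternant

theorem det_fromBlocks_self_neg {R n : Type*} [CommRing R] [Fintype n] [DecidableEq n]
    (A B : Matrix n n R) :
    det (fromBlocks A B A (-B)) = (-2) ^ Fintype.card n * det A * det B := by
  have hfac : fromBlocks A B A (-B) = fromBlocks 1 0 1 1 * fromBlocks A B 0 ((-2 : R) • B) := by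
    rw [fromBlocks_multiply]
    congr 1 <;> simp only [Matrix.one_mul, Matrix.zero_mul, Matrix.mul_zero, add_zero]
    module
  rw [hfac, det_mul, det_fromBlocks_zero₁₂, det_fromBlocks_zero₂₁, det_smul]
  simp only [det_one, mul_one, one_mul]
  ring

section WithInv

variable {α : Type*}

def withInv (x : α → 𝕜) : α ⊕ α → 𝕜 :=
  Sum.elim x fun a => (x a)⁻¹

theorem withInv_swap (x : α → 𝕜) (r : α ⊕ α) : withInv x r.swap = (withInv x r)⁻¹ := by
  cases r <;> simp [withInv]

variable [Fintype α] [DecidableEq α]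

theorem det_alternant_withInv_const_add {x : α → 𝕜} (hx : ∀ a, x a ≠ 0) (s : ℤ)
    (e : α ⊕ α → ℤ) :
    det (alternant (withInv x) fun j => s + e j) = det (alternant (withInv x) e) := by
  have hrow : alternant (withInv x) (fun j => s + e j) =
      of fun i j => withInv x i ^ s * alternant (withInv x) e i j := by
    ext (i | i) j <;> simp [alternant, withInv, zpow_add₀, hx]
  rw [hrow, det_mul_column, Fintype.prod_sum_type, ← Finset.prod_mul_distrib]
  simp [withInv, fun a => mul_inv_cancel₀ (zpow_ne_zero s (hx a))]

def orthAlternant (x : α → 𝕜) (b : α → ℤ) : Matrix α α 𝕜 :=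
  of fun i a => x i ^ b a + x i ^ (-b a)

def sympAlternant (x : α → 𝕜) (c : α → ℤ) : Matrix α α 𝕜 :=
  of fun i a => x i ^ c a - x i ^ (-c a)

def orthSympMatrix (x : α → 𝕜) (b c : α → ℤ) : Matrix (α ⊕ α) (α ⊕ α) 𝕜 :=
  of fun r j => Sum.elim (fun a => withInv x r ^ b a + withInv x r ^ (-b a))
    (fun a => withInv x r ^ c a - withInv x r ^ (-c a)) j

theorem det_orthSympMatrix (x : α → 𝕜) (b c : α → ℤ) :
    det (orthSympMatrix x b c) =
      (-2) ^ Fintype.card α * (det (orthAlternant x b) * det (sympAlternant x c)) := by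
  rw [← mul_assoc, ← det_fromBlocks_self_neg]
  congr 1
  ext (r | r) (j | j) <;> simp [orthSympMatrix, withInv, orthAlternant, sympAlternant, add_comm]

end WithInv

section Pairing

variable {α : Type*} [Fintype α] [DecidableEq α] (x : α → 𝕜) (a₀ : α)

def mixedAlternant (b c : α → ℤ) : Matrix (α ⊕ α) (α ⊕ α) 𝕜 :=
  (alternant (withInv x) (Sum.elim b (-c))).updateCol (Sum.inl a₀)
    fun r => withInv x r ^ b a₀ + withInv x r ^ (-b a₀)

/-- On each pair of columns `inl a`, `inr a` with `a ≠ a₀` it acts by `[[1, 1], [1, -1]]`. -/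
def pairingMatrix : Matrix (α ⊕ α) (α ⊕ α) 𝕜 :=
  fromBlocks 1 (diagonal fun a => if a = a₀ then 0 else 1)
    (diagonal fun a => if a = a₀ then 0 else 1) (diagonal fun a => if a = a₀ then 1 else -1)

theorem det_pairingMatrix :
    det (pairingMatrix a₀ : Matrix (α ⊕ α) (α ⊕ α) 𝕜) = ∏ a, if a = a₀ then 1 else -2 := by
  rw [pairingMatrix, det_fromBlocks_one₁₁, diagonal_mul_diagonal, diagonal_sub, det_diagonal]
  congr 1; ext a; split_ifs <;> norm_num

variable {b c : α → ℤ}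

theorem orthSympMatrix_eq_mul_pairingMatrix (hbc : ∀ a ≠ a₀, b a = c a) :
    orthSympMatrix x b c =
      (mixedAlternant x a₀ b c).updateCol (Sum.inr a₀)
          (fun r => withInv x r ^ c a₀ - withInv x r ^ (-c a₀)) * pairingMatrix a₀ := by
  ext r (a | a) <;> by_cases ha : a = a₀ <;>
    simp [orthSympMatrix, mul_apply, Fintype.sum_sum_type, pairingMatrix, mixedAlternant,
      alternant, ha, hbc, one_apply, diagonal_apply, sub_eq_add_neg]

theorem det_mixedAlternant :
    det (mixedAlternant x a₀ b c) =
      det (alternant (withInv x) (Sum.elim b (-c))) +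
        det (alternant (withInv x) (Function.update (Sum.elim b (-c)) (Sum.inl a₀) (-b a₀))) := by
  rw [mixedAlternant, ← Pi.add_def, det_updateCol_add, alternant_update]
  congr 2
  exact updateCol_eq_self _ _

/-- Inverting the variables swaps the rows `x a`, `(x a)⁻¹` and, since `b = c` off `a₀`, the
columns `inl a`, `inr a` for `a ≠ a₀`; the only other change is the transposition of the
columns `inl a₀`, `inr a₀`. -/
theorem det_updateCol_inr_mixedAlternant (hbc : ∀ a ≠ a₀, b a = c a) :
    det ((mixedAlternant x a₀ b c).updateCol (Sum.inr a₀) fun r => withInv x r ^ c a₀) =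
      -det (mixedAlternant x a₀ b c) := by
  have hsym : ((mixedAlternant x a₀ b c).updateCol (Sum.inr a₀) fun r => withInv x r ^ c a₀) =
      ((mixedAlternant x a₀ b c).submatrix (Equiv.sumComm α α) (Equiv.sumComm α α)).submatrix id
        (Equiv.swap (Sum.inl a₀) (Sum.inr a₀)) := by
    ext r (a | a) <;> by_cases ha : a = a₀ <;>
      simp [mixedAlternant, alternant, ha, hbc, withInv_swap, Equiv.swap_apply_of_ne_of_ne,
        add_comm]
  rw [hsym, det_permute', det_submatrix_equiv_self, Equiv.Perm.sign_swap Sum.inl_ne_inr]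
  simp

theorem det_updateCol_inr_mixedAlternant_sub (hbc : ∀ a ≠ a₀, b a = c a) :
    det ((mixedAlternant x a₀ b c).updateCol (Sum.inr a₀)
        fun r => withInv x r ^ c a₀ - withInv x r ^ (-c a₀)) =
      -2 * det (mixedAlternant x a₀ b c) := by
  have hcol : (fun r => withInv x r ^ c a₀ - withInv x r ^ (-c a₀)) =
      (fun r => withInv x r ^ c a₀) + (-1 : 𝕜) • fun r => withInv x r ^ (-c a₀) := by
    ext r; simp [sub_eq_add_neg]
  have hself : ((mixedAlternant x a₀ b c).updateCol (Sum.inr a₀)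
      fun r => withInv x r ^ (-c a₀)) = mixedAlternant x a₀ b c := by
    simpa [mixedAlternant, alternant] using updateCol_eq_self (mixedAlternant x a₀ b c) (Sum.inr a₀)
  rw [hcol, det_updateCol_add, det_updateCol_smul, det_updateCol_inr_mixedAlternant x a₀ hbc,
    hself]
  ring

theorem det_orthAlternant_mul_det_sympAlternant [NeZero (2 : 𝕜)] (hbc : ∀ a ≠ a₀, b a = c a) :
    det (orthAlternant x b) * det (sympAlternant x c) =
      det (alternant (withInv x) (Sum.elim b (-c))) +
        det (alternant (withInv x) (Function.update (Sum.elim b (-c)) (Sum.inl a₀) (-b a₀))) := by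
  have h := det_orthSympMatrix x b c
  rw [orthSympMatrix_eq_mul_pairingMatrix x a₀ hbc, det_mul,
    det_updateCol_inr_mixedAlternant_sub x a₀ hbc, det_pairingMatrix, det_mixedAlternant] at h
  have hpow : (-2 : 𝕜) * ∏ a, (if a = a₀ then 1 else -2) = (-2) ^ Fintype.card α := by
    rw [← Finset.mul_prod_erase _ _ (Finset.mem_univ a₀), if_pos rfl, one_mul,
      Finset.prod_congr rfl fun a ha => if_neg (Finset.ne_of_mem_erase ha), Finset.prod_const,
      Finset.card_erase_of_mem (Finset.mem_univ a₀), ← pow_succ', Finset.card_univ,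
      Nat.sub_add_cancel (Fintype.card_pos_iff.2 ⟨a₀⟩)]
  refine (mul_left_cancel₀ (pow_ne_zero (Fintype.card α) (neg_ne_zero.2 two_ne_zero)) ?_).symm
  rw [← h, ← hpow]
  ring

theorem det_orthAlternant_mul_det_sympAlternant_of_perm [NeZero (2 : 𝕜)] (π : Equiv.Perm α)
    (hbc : ∀ a ≠ a₀, b a = c (π a)) :
    det (orthAlternant x b) * det (sympAlternant x c) =
      det (alternant (withInv x) (Sum.elim b (-c))) +
        det (alternant (withInv x) (Function.update (Sum.elim b (-c)) (Sum.inl a₀) (-b a₀))) := by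
  set σ : Equiv.Perm (α ⊕ α) := Equiv.sumCongr (Equiv.refl α) π
  have h := det_orthAlternant_mul_det_sympAlternant x a₀ (c := c ∘ π) hbc
  have hcomp : Sum.elim b (-(c ∘ π)) = Sum.elim b (-c) ∘ σ := by ext (a | a) <;> rfl
  have hσ : Equiv.Perm.sign σ = Equiv.Perm.sign π := by
    simp [σ, Equiv.Perm.sign_sumCongr]
  rw [hcomp, show Sum.inl a₀ = σ.symm (Sum.inl a₀) from rfl, ← Function.update_comp_equiv,
    det_alternant_comp, det_alternant_comp, hσ, sympAlternant,
    show (of fun i a => x i ^ (c ∘ π) a - x i ^ (-(c ∘ π) a)) = (sympAlternant x c).submatrix id π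
      from rfl, det_permute', ← mul_add, mul_left_comm] at h
  exact mul_left_cancel₀ ((Equiv.Perm.sign π).isUnit.map (Int.castRingHom 𝕜)).ne_zero h

end Pairing

def interleaveEquiv (n : ℕ) : Fin (2 * n) ≃ Fin n ⊕ Fin n where
  toFun h := if (h : ℕ) % 2 = 0 then .inl ⟨h / 2, by omega⟩ else .inr ⟨h / 2, by omega⟩
  invFun := Sum.elim (fun i => ⟨2 * i, by omega⟩) fun i => ⟨2 * i + 1, by omega⟩
  left_inv h := by dsimp only; split_ifs <;> ext <;> simp only [Sum.elim_inl, Sum.elim_inr] <;> omega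
  right_inv := by rintro (i | i) <;> simp only [Sum.elim_inl, Sum.elim_inr] <;> split_ifs <;> grind

/-- The second half is reversed, so that the decreasing exponents of a Schur numerator become
`Sum.elim b (-c)` with `b` and `c` both decreasing, as in `orthAlternant` and `sympAlternant`. -/
def foldEquiv (n : ℕ) : Fin (2 * n) ≃ Fin n ⊕ Fin n :=
  (finCongr (two_mul n)).trans (finSumFinEquiv.symm.trans (Equiv.sumCongr (.refl _) Fin.revPerm))

theorem foldEquiv_symm_inl {n : ℕ} (a : Fin n) : ((foldEquiv n).symm (.inl a) : ℕ) = a :=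
  rfl

theorem foldEquiv_symm_inr {n : ℕ} (a : Fin n) :
    ((foldEquiv n).symm (.inr a) : ℕ) = 2 * n - 1 - a :=
  show n + (n - (a + 1)) = _ by omega

theorem pairVars_eq_withInv {n : ℕ} (x : Fin n → ℂ) :
    pairVars x = withInv x ∘ interleaveEquiv n := by
  ext h
  unfold pairVars
  split_ifs with h0 <;> simp [withInv, interleaveEquiv, h0]

theorem det_pairVars_zpow {n : ℕ} (x : Fin n → ℂ) (E : Fin (2 * n) → ℤ) :
    det (of fun h t => pairVars x h ^ E t) =
      Equiv.Perm.sign ((foldEquiv n).trans (interleaveEquiv n).symm) *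
        det (alternant (withInv x) (E ∘ (foldEquiv n).symm)) := by
  have : (of fun h t => pairVars x h ^ E t) =
      ((alternant (withInv x) (E ∘ (foldEquiv n).symm)).submatrix (interleaveEquiv n)
        (interleaveEquiv n)).submatrix id ((foldEquiv n).trans (interleaveEquiv n).symm) := by
    ext h t
    simp [alternant, pairVars_eq_withInv]
  rw [this, det_permute', det_submatrix_equiv_self]

theorem det_schur_add_det_schur_eq {n : ℕ} (hn : 1 ≤ n) {x : Fin n → ℂ} (hx : ∀ i, x i ≠ 0)
    (k : ℤ) :
    det (of fun h t : Fin (2 * n) => pairVars x h ^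
        ((if (t : ℕ) < n then 2 * k else 0) + ((2 * n : ℕ) : ℤ) - 1 - t)) +
      det (of fun h t : Fin (2 * n) => pairVars x h ^
        ((if (t : ℕ) < n - 1 then 2 * k else 0) + ((2 * n : ℕ) : ℤ) - 1 - t)) =
      Equiv.Perm.sign ((foldEquiv n).trans (interleaveEquiv n).symm) *
        (det (orthAlternant x fun t => k + n - 1 - t) *
          det (sympAlternant x fun t => k + n - t)) := by
  obtain ⟨n, rfl⟩ : ∃ n', n = n' + 1 := ⟨n - 1, by omega⟩
  -- the symplectic exponents are the orthogonal ones shifted by one column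
  rw [det_pairVars_zpow, det_pairVars_zpow, ← mul_add,
    det_orthAlternant_mul_det_sympAlternant_of_perm x (Fin.last n) (finRotate (n + 1))]
  · congr 2 <;> conv_rhs => rw [← det_alternant_withInv_const_add hx (k + (n + 1 : ℕ))]
    all_goals
      congr 2
      ext (a | a) <;> have := a.isLt <;>
        simp only [Function.comp_apply, foldEquiv_symm_inl, foldEquiv_symm_inr, Sum.elim_inl,
          Sum.elim_inr, Pi.neg_apply, Function.update_apply, Sum.inl.injEq, reduceCtorEq, Fin.ext_iff,
          Fin.val_last, add_tsub_cancel_right, ↓reduceIte] <;>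
        split_ifs <;> omega
  · intro a ha
    rw [coe_finRotate_of_ne_last ha]
    push_cast
    ring

theorem spChar_const {n : ℕ} (k : ℤ) (x : Fin n → ℂ) :
    spChar (fun _ => k) x =
      det (sympAlternant x fun t => k + n - t) / det (sympAlternant x fun t => (n : ℤ) - t) :=
  rfl

theorem oevenChar_const {n : ℕ} (k : ℤ) (x : Fin n → ℂ) :
    oevenChar (fun _ => k) x =
      2 * det (orthAlternant x fun t => k + n - 1 - t) /
        det (orthAlternant x fun t => (n : ℤ) - 1 - t) :=
  rfl

theorem schur_sum_even_rectangle_factorization_general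
    (m n : ℕ) (hn : 1 ≤ n) (x : Fin n → ℂ) (hx : ∀ i, x i ≠ 0) :
    schurChar (fun t : Fin (2 * n) => if (t : ℕ) < n then (2 * m : ℤ) else 0)
        (pairVars x) +
      schurChar (fun t : Fin (2 * n) => if (t : ℕ) < n - 1 then (2 * m : ℤ) else 0)
        (pairVars x) =
      spChar (fun _ => (m : ℤ)) x * oevenChar (fun _ => (m : ℤ)) x := by
  have key := det_schur_add_det_schur_eq hn hx m
  -- at `k = 0` both Schur numerators are the common denominator
  have key₀ := det_schur_add_det_schur_eq hn hx 0
  simp only [mul_zero, ite_self, zero_add] at key₀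
  have hε := ((Equiv.Perm.sign ((foldEquiv n).trans (interleaveEquiv n).symm)).isUnit.map
    (Int.castRingHom ℂ)).ne_zero
  rw [schurChar, schurChar, ← add_div, key, spChar_const, oevenChar_const,
    eq_div_of_mul_eq two_ne_zero ((mul_two _).trans key₀)]
  field_simp

/-- **Theorem 4.**  For `m ≥ 0`, `n ≥ 1` and nonzero complex numbers
`x₁,…,xₙ` with `x₁, x₁⁻¹, …, xₙ, xₙ⁻¹` pairwise distinct,
`s_{((2m)^n)}(x₁,x₁⁻¹,…) + s_{((2m)^{n-1})}(x₁,x₁⁻¹,…)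
  = sp_{(m^n)}(x₁,…,xₙ) · o^even_{(m^n)}(x₁,…,xₙ)`. -/
theorem schur_sum_even_rectangle_factorization
    (m n : ℕ) (hn : 1 ≤ n) (x : Fin n → ℂ) (hx : ∀ i, x i ≠ 0)
    (hdist : Function.Injective (pairVars x)) :
    schurChar (fun t : Fin (2 * n) => if (t : ℕ) < n then (2 * m : ℤ) else 0)
        (pairVars x) +
      schurChar (fun t : Fin (2 * n) => if (t : ℕ) < n - 1 then (2 * m : ℤ) else 0)
        (pairVars x) =
      spChar (fun _ => (m : ℤ)) x * oevenChar (fun _ => (m : ℤ)) x :=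
  schur_sum_even_rectangle_factorization_general m n hn x hx
end

section
/- Let λ=(λ_1,…,λ_N) be a non-increasing sequence of non-negative integers and let x_1,…,x_N be nonzero complex numbers with fixed square roots y_i (y_i^2 = x_i) such that all denominator determinants below are nonzero. Then sp_λ(x_1,…,x_N) · ∏_{i=1}^{N}(y_i + y_i^{−1}) = so_{λ+1/2}(x_1,…,x_N), where λ+1/2 denotes the sequence (λ_1+1/2, …, λ_N+1/2) and so_{λ+1/2} is computed using the y_i. -/
open Matrix Finset

/-- The denominator determinant of the symplectic character. -/
noncomputable def spDen {N : ℕ} (x : Fin N → ℂ) : ℂ :=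
  Matrix.det (Matrix.of fun h t : Fin N =>
    x h ^ ((N : ℤ) - ((t : ℕ) : ℤ)) - x h ^ (-((N : ℤ) - ((t : ℕ) : ℤ))))
/-- The denominator determinant of the odd orthogonal character, in terms of
the square roots `y` of the variables. -/
noncomputable def soDen {N : ℕ} (y : Fin N → ℂ) : ℂ :=
  Matrix.det (Matrix.of fun h t : Fin N =>
    y h ^ (2 * ((N : ℤ) - 1 - ((t : ℕ) : ℤ)) + 1) -
      y h ^ (-(2 * ((N : ℤ) - 1 - ((t : ℕ) : ℤ)) + 1)))

/-- Key per-entry identity: multiplying `y^c - y^(-c)` by `y + y⁻¹`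
splits it into the exponent-shifted terms `c+1` and `c-1`. -/
lemma aux_key (y : ℂ) (hy : y ≠ 0) (c : ℤ) :
    (y + y⁻¹) * (y ^ c - y ^ (-c)) =
      (y ^ (c + 1) - y ^ (-(c + 1))) + (y ^ (c - 1) - y ^ (-(c - 1))) := by
  have hu : y ^ c ≠ 0 := zpow_ne_zero _ hy
  rw [zpow_add₀ hy, zpow_sub₀ hy, neg_add, neg_sub, zpow_add₀ hy, zpow_sub₀ hy,
    _root_.zpow_neg, _root_.zpow_neg]
  field_simp
  ring

/-- **Identity (1.4).**  For a non-increasing sequence `λ` of non-negative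
integers and nonzero `x₁,…,x_N` with square roots `y i` of `x i`, provided
the denominator determinants are nonzero,
`sp_λ(x₁,…,x_N) · ∏ᵢ (yᵢ + yᵢ⁻¹) = so_{λ+1/2}(x₁,…,x_N)`. -/
theorem sp_mul_prod_eq_so_half
    (N : ℕ) (lam : Fin N → ℕ) (hlam : Antitone lam)
    (x y : Fin N → ℂ) (hx : ∀ i, x i ≠ 0) (hy : ∀ i, y i ^ 2 = x i)
    (hden1 : spDen x ≠ 0) (hden2 : soDen y ≠ 0) :
    spChar (fun t => (lam t : ℤ)) x * (∏ i, (y i + (y i)⁻¹)) =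
      soChar2 (fun t => 2 * (lam t : ℤ) + 1) y := by
  have hy0 : ∀ i, y i ≠ 0 := fun i hi => hx i (by rw [← hy i, hi]; ring)
  have hpow : ∀ (i : Fin N) (k : ℤ), x i ^ k = y i ^ (2 * k) := by
    intro i k
    rw [← hy i, ← zpow_natCast (y i) 2, ← _root_.zpow_mul]; norm_num
  have hF : ∀ (i : Fin N) (k : ℤ),
      y i ^ (2 * k) - y i ^ (-(2 * k)) = x i ^ k - x i ^ (-k) := by
    intro i k
    rw [hpow i k, hpow i (-k), show 2 * (-k) = -(2 * k) from by ring]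
  -- names for the four matrices
  set D : Matrix (Fin N) (Fin N) ℂ := Matrix.of fun h t : Fin N =>
      x h ^ ((N : ℤ) - ((t : ℕ) : ℤ)) - x h ^ (-((N : ℤ) - ((t : ℕ) : ℤ))) with hD
  set S : Matrix (Fin N) (Fin N) ℂ := Matrix.of fun h t : Fin N =>
      y h ^ (2 * ((N : ℤ) - 1 - ((t : ℕ) : ℤ)) + 1) -
        y h ^ (-(2 * ((N : ℤ) - 1 - ((t : ℕ) : ℤ)) + 1)) with hS
  set T : Matrix (Fin N) (Fin N) ℂ := Matrix.of fun s t : Fin N =>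
      (if s = t then (1 : ℂ) else 0) + (if (s : ℕ) = (t : ℕ) + 1 then 1 else 0) with hT
  -- the numerators of the two characters agree entrywise
  have hnum : (Matrix.of fun h t : Fin N =>
        x h ^ (((lam t : ℤ)) + (N : ℤ) - ((t : ℕ) : ℤ)) -
          x h ^ (-(((lam t : ℤ)) + (N : ℤ) - ((t : ℕ) : ℤ)))) =
      (Matrix.of fun h t : Fin N =>
        y h ^ ((2 * (lam t : ℤ) + 1) + 2 * ((N : ℤ) - 1 - ((t : ℕ) : ℤ)) + 1) -
          y h ^ (-((2 * (lam t : ℤ) + 1) + 2 * ((N : ℤ) - 1 - ((t : ℕ) : ℤ)) + 1))) := by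
    ext h t
    simp only [Matrix.of_apply]
    rw [hpow, hpow,
      show (2 : ℤ) * ((lam t : ℤ) + (N : ℤ) - ((t : ℕ) : ℤ)) =
        (2 * (lam t : ℤ) + 1) + 2 * ((N : ℤ) - 1 - ((t : ℕ) : ℤ)) + 1 from by ring,
      show (2 : ℤ) * (-(((lam t : ℤ)) + (N : ℤ) - ((t : ℕ) : ℤ))) =
        -((2 * (lam t : ℤ) + 1) + 2 * ((N : ℤ) - 1 - ((t : ℕ) : ℤ)) + 1) from by ring]
  -- `T` is unitriangular
  have hTdet : T.det = 1 := by
    have htri : ∀ i j : Fin N, i < j → T i j = 0 := by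
      intro i j hij
      have h1 : ¬ (i = j) := Fin.ne_of_lt hij
      have h2 : ¬ ((i : ℕ) = (j : ℕ) + 1) := by
        have := Fin.lt_iff_val_lt_val.mp hij; omega
      simp [hT, h1, h2]
    rw [Matrix.det_of_lowerTriangular T htri]
    apply Finset.prod_eq_one
    intro i _
    simp [hT]
  -- the row-scaled `S` equals `D * T`
  have hDT : (Matrix.of fun h t : Fin N => (y h + (y h)⁻¹) * S h t) = D * T := by
    ext h t
    rw [Matrix.mul_apply]
    have hrhs : ∑ s, D h s * T s t =
        D h t + (if hN : (t : ℕ) + 1 < N then D h ⟨(t : ℕ) + 1, hN⟩ else 0) := by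
      simp only [hT, Matrix.of_apply, mul_add, Finset.sum_add_distrib, mul_ite,
        mul_one, mul_zero]
      congr 1
      · simp [Finset.sum_ite_eq']
      · by_cases hN : (t : ℕ) + 1 < N
        · rw [dif_pos hN]
          have hiff : ∀ s : Fin N, ((s : ℕ) = (t : ℕ) + 1) = (s = ⟨(t : ℕ) + 1, hN⟩) := by
            intro s; simp [Fin.ext_iff]
          simp only [hiff]
          simp [Finset.sum_ite_eq']
        · rw [dif_neg hN]
          apply Finset.sum_eq_zero
          intro s _
          rw [if_neg]
          omega
    rw [hrhs]
    simp only [Matrix.of_apply, hS, hD]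
    rw [aux_key (y h) (hy0 h),
      show (2 * ((N : ℤ) - 1 - ((t : ℕ) : ℤ)) + 1) + 1 = 2 * ((N : ℤ) - ((t : ℕ) : ℤ)) from by
        ring,
      show (2 * ((N : ℤ) - 1 - ((t : ℕ) : ℤ)) + 1) - 1 =
        2 * ((N : ℤ) - (((t : ℕ) : ℤ) + 1)) from by ring,
      hF h ((N : ℤ) - ((t : ℕ) : ℤ)), hF h ((N : ℤ) - (((t : ℕ) : ℤ) + 1))]
    congr 1
    by_cases hN : (t : ℕ) + 1 < N
    · rw [dif_pos hN]
      push_cast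
      norm_num
    · rw [dif_neg hN]
      rw [show (N : ℤ) - (((t : ℕ) : ℤ) + 1) = 0 from by
        have := t.isLt; omega]
      simp
  -- hence the denominators are related by the product
  have hden : spDen x = (∏ i, (y i + (y i)⁻¹)) * soDen y := by
    have h1 : (Matrix.of fun h t : Fin N => (y h + (y h)⁻¹) * S h t).det =
        (∏ i, (y i + (y i)⁻¹)) * S.det :=
      Matrix.det_mul_column _ _
    have h2 : spDen x = D.det := rfl
    have h3 : soDen y = S.det := rfl
    rw [h2, h3, ← h1, hDT, Matrix.det_mul, hTdet, mul_one]
  have hP : (∏ i, (y i + (y i)⁻¹)) ≠ 0 := by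
    intro h0
    rw [hden, h0, zero_mul] at hden1
    exact hden1 rfl
  -- assemble
  unfold spChar soChar2
  rw [show (Matrix.of fun h t : Fin N =>
        x h ^ ((N : ℤ) - ((t : ℕ) : ℤ)) - x h ^ (-((N : ℤ) - ((t : ℕ) : ℤ)))).det
      = spDen x from rfl,
    show (Matrix.of fun h t : Fin N =>
        y h ^ (2 * ((N : ℤ) - 1 - ((t : ℕ) : ℤ)) + 1) -
          y h ^ (-(2 * ((N : ℤ) - 1 - ((t : ℕ) : ℤ)) + 1))).det = soDen y from rfl,
    hnum, hden]
  have habs : ∀ A P Sd : ℂ, P ≠ 0 → Sd ≠ 0 → A / (P * Sd) * P = A / Sd := by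
    intro A P Sd hP hSd
    field_simp
  exact habs _ _ _ hP hden2
end

section
/- Let m and n be non-negative integers and let x_1,…,x_n be nonzero complex numbers with fixed square roots y_i (y_i^2 = x_i) such that the 2n numbers x_1, x_1^{-1}, …, x_n, x_n^{-1} are pairwise distinct. Then so_{(m^n)}(x_1,…,x_n) = (1/D_2(n)) · Σ_{A⊆[n]} (−1)^{(Σ_{a∈A} a) − binom(|A|,2) + n} · (∏_{a∈A} y_a)^{2m+1} · (∏_{a∈A^c} y_a^{−1})^{2m+1} · V(A)·V((A^c)^{−1})·R(A,(A^c)^{−1}), where the sum is over all subsets A of [n], A^c is the complement of A in [n], and D_2(n) = V([n]) · ∏_{i=1}^{n} x_i^{−n+i}(y_i − y_i^{−1}) · ∏_{1≤i<j≤n}(x_i − x_j^{−1}). -/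
open Matrix Finset

/-- `V(A) = ∏_{a,b ∈ A, a < b} (x_a - x_b)`. -/
noncomputable def Vprod {M : ℕ} (x : Fin M → ℂ) (A : Finset (Fin M)) : ℂ :=
  ∏ a ∈ A, ∏ b ∈ A, if a < b then x a - x b else 1

/-- `R(A, B⁻¹) = ∏_{a ∈ A} ∏_{b ∈ B} (x_a - x_b⁻¹)`. -/
noncomputable def Rprod {M : ℕ} (x : Fin M → ℂ) (A B : Finset (Fin M)) : ℂ :=
  ∏ a ∈ A, ∏ b ∈ B, (x a - (x b)⁻¹)

/-!
Write `e = n - 1 - t` for the column index. A numerator entry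
`y^(2m+2e+1) - y^-(2m+2e+1) = y^(2m+1) x^e - y^-(2m+1) x^-e` is a sum of two row-scaled
Vandermonde entries, so multilinearity in the rows expands the numerator over the set `A` of
rows taking the first part. Each summand is a Vandermonde determinant in the variables `x_a`
(`a ∈ A`) and `x_b⁻¹` (`b ∉ A`), which factors as `V(A) V((Aᶜ)⁻¹) R(A, (Aᶜ)⁻¹)` up to the
sign `(-1)^#{b < a : a ∈ A, b ∉ A}`; since `Σ_{a∈A} a = binom(|A|, 2) + #{b < a : a ∈ A, b ∉ A}`
this is the sign of the theorem. In the denominator, `y^(2e+1) - y^-(2e+1)` is `y - y⁻¹` times a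
monic polynomial of degree `e` in `x + x⁻¹`, so the denominator is a Vandermonde determinant in
the `x_i + x_i⁻¹`, and `(x_i + x_i⁻¹) - (x_j + x_j⁻¹) = x_i⁻¹ (x_i - x_j) (x_i - x_j⁻¹)`.
-/

open Polynomial

-- `laurentSumPoly j` evaluated at `z + z⁻¹` is `∑_{k=-j}^{j} z ^ k`.
noncomputable def laurentSumPoly : ℕ → ℂ[X]
  | 0 => 1
  | 1 => X + 1
  | j + 2 => X * laurentSumPoly (j + 1) - laurentSumPoly j

theorem laurentSumPoly_monic_natDegree :
    ∀ j, (laurentSumPoly j).Monic ∧ (laurentSumPoly j).natDegree = j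
  | 0 => by simp [laurentSumPoly]
  | 1 => by simpa [laurentSumPoly] using ⟨monic_X_add_C (1 : ℂ), natDegree_X_add_C (1 : ℂ)⟩
  | j + 2 => by
    obtain ⟨hmonic, hdeg⟩ := laurentSumPoly_monic_natDegree (j + 1)
    have hdeg' : (X * laurentSumPoly (j + 1)).natDegree = j + 2 := by
      rw [natDegree_X_mul hmonic.ne_zero, hdeg]
    have hlt : (laurentSumPoly j).natDegree < (X * laurentSumPoly (j + 1)).natDegree := by
      rw [(laurentSumPoly_monic_natDegree j).2, hdeg']; omega
    rw [laurentSumPoly]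
    exact ⟨(monic_X.mul hmonic).sub_of_left (degree_lt_degree hlt),
      by rw [natDegree_sub_eq_left_of_natDegree_lt hlt, hdeg']⟩

theorem sub_inv_mul_eval_laurentSumPoly {y : ℂ} (hy : y ≠ 0) :
    ∀ j : ℕ, (y - y⁻¹) * (laurentSumPoly j).eval (y ^ 2 + (y ^ 2)⁻¹) =
      y ^ (2 * j + 1) - (y ^ (2 * j + 1))⁻¹
  | 0 => by simp [laurentSumPoly]
  | 1 => by
    simp only [laurentSumPoly, eval_add, eval_X, eval_one]
    field_simp
    ring
  | j + 2 => by
    have h1 := sub_inv_mul_eval_laurentSumPoly hy (j + 1)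
    have h0 := sub_inv_mul_eval_laurentSumPoly hy j
    simp only [laurentSumPoly, eval_sub, eval_mul, eval_X]
    rw [mul_sub, mul_left_comm, h1, h0]
    field_simp
    ring

theorem zpow_odd_sub_zpow_neg {x y : ℂ} (hy : y ^ 2 = x) (j k : ℕ) :
    y ^ (2 * (j : ℤ) + 2 * k + 1) - y ^ (-(2 * (j : ℤ) + 2 * k + 1)) =
      y ^ (2 * j + 1) * x ^ k + -(y⁻¹ ^ (2 * j + 1)) * x⁻¹ ^ k := by
  have hexp : 2 * (j : ℤ) + 2 * k + 1 = ((2 * j + 1 + 2 * k : ℕ) : ℤ) := by push_cast; ring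
  rw [hexp, _root_.zpow_neg, zpow_natCast, ← hy]
  ring

theorem sum_card_filter_lt_eq_choose {α : Type*} [LinearOrder α] (A : Finset α) :
    ∑ a ∈ A, #{b ∈ A | b < a} = A.card.choose 2 := by
  induction A using Finset.induction_on_max with
  | empty => simp
  | insert c A hc ih =>
    have hcA : c ∉ A := fun h => lt_irrefl c (hc c h)
    have hfilter : ∀ a ∈ A, #{b ∈ insert c A | b < a} = #{b ∈ A | b < a} := fun a ha => by
      rw [filter_insert, if_neg (hc a ha).not_gt]
    rw [sum_insert hcA, filter_insert, if_neg (lt_irrefl c), filter_true_of_mem hc,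
      sum_congr rfl hfilter, ih, card_insert_of_notMem hcA, Nat.choose_succ_succ',
      Nat.choose_one_right]

section

variable {n : ℕ}

theorem det_eval_rev_eq_Vprod (p : ℕ → ℂ[X]) (hmonic : ∀ j, (p j).Monic)
    (hdeg : ∀ j, (p j).natDegree = j) (u : Fin n → ℂ) :
    (of fun h t : Fin n => (p (Fin.rev t)).eval (u h)).det = Vprod u univ := by
  have hrev : (of fun h t : Fin n => (p (Fin.rev t)).eval (u h)) =
      (of fun h t : Fin n => (p t).eval (u (Fin.rev h))).submatrix Fin.revPerm Fin.revPerm := by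
    ext h t
    simp
  rw [hrev, det_submatrix_equiv_self, ← det_eval_matrixOfPolynomials_eq_det_vandermonde _
    (fun t => p t) (fun t => hdeg t) (fun t => hmonic t), det_vandermonde, Vprod, prod_comm]
  refine Fintype.prod_equiv Fin.revPerm _ _ fun i => ?_
  rw [← filter_lt_eq_Ioi, prod_filter]
  exact Fintype.prod_equiv Fin.revPerm _ _ fun j => by simp [Fin.rev_lt_rev]

theorem det_mul_pow_rev_add_mul_pow_rev (c d u v : Fin n → ℂ) :
    (of fun h t : Fin n => c h * u h ^ (Fin.rev t : ℕ) + d h * v h ^ (Fin.rev t : ℕ)).det =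
      ∑ A : Finset (Fin n), (∏ h, A.piecewise c d h) * Vprod (A.piecewise u v) univ := by
  let a : Fin n → Fin n → ℂ := fun h t => c h * u h ^ (Fin.rev t : ℕ)
  let b : Fin n → Fin n → ℂ := fun h t => d h * v h ^ (Fin.rev t : ℕ)
  refine ((detRowAlternating (R := ℂ)).toMultilinearMap.map_add_univ a b).trans
    (sum_congr rfl fun A _ => ?_)
  let V : Matrix (Fin n) (Fin n) ℂ :=
    of fun h t => (X ^ (Fin.rev t : ℕ) : ℂ[X]).eval (A.piecewise u v h)
  have hrows : A.piecewise a b = fun h t => A.piecewise c d h * V h t := by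
    ext h t
    by_cases hh : h ∈ A <;> simp [hh, a, b, V]
  change det (of (A.piecewise a b)) = _
  rw [hrows, det_mul_column, det_eval_rev_eq_Vprod _ monic_X_pow natDegree_X_pow]

theorem Vprod_congr {u v : Fin n → ℂ} {A : Finset (Fin n)} (h : ∀ a ∈ A, u a = v a) :
    Vprod u A = Vprod v A :=
  prod_congr rfl fun a ha => prod_congr rfl fun b hb => by rw [h a ha, h b hb]

theorem Vprod_univ_eq_mul_compl (z : Fin n → ℂ) (A : Finset (Fin n)) :
    Vprod z univ = Vprod z A * Vprod z Aᶜ *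
      ∏ a ∈ A, ∏ b ∈ Aᶜ, if a < b then z a - z b else z b - z a := by
  set F : Fin n → Fin n → ℂ := fun a b => if a < b then z a - z b else 1
  have hsplit : ∀ a, ∏ b, F a b = (∏ b ∈ A, F a b) * ∏ b ∈ Aᶜ, F a b := fun a =>
    (prod_mul_prod_compl A (F a)).symm
  have hcross : ∀ a ∈ A, ∀ b ∈ Aᶜ,
      F a b * F b a = if a < b then z a - z b else z b - z a := by
    intro a ha b hb
    have hab : a ≠ b := by rintro rfl; exact mem_compl.mp hb ha
    rcases hab.lt_or_gt with h | h <;> simp [F, h, h.not_gt]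
  calc Vprod z univ = (∏ a ∈ A, ∏ b, F a b) * ∏ a ∈ Aᶜ, ∏ b, F a b :=
        (prod_mul_prod_compl A _).symm
    _ = Vprod z A * Vprod z Aᶜ * ∏ a ∈ A, ∏ b ∈ Aᶜ, (F a b * F b a) := by
        simp only [hsplit, prod_mul_distrib,
          prod_comm (s := Aᶜ) (t := A) (f := fun b a => F b a)]
        rw [Vprod, Vprod]
        ring
    _ = _ := by
        congr 1
        exact prod_congr rfl fun a ha => prod_congr rfl fun b hb => hcross a ha b hb

def crossInversions (A : Finset (Fin n)) : ℕ := ∑ a ∈ A, #{b ∈ Aᶜ | b < a}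

theorem Vprod_piecewise (u v : Fin n → ℂ) (A : Finset (Fin n)) :
    Vprod (A.piecewise u v) univ = (-1) ^ crossInversions A *
      (Vprod u A * Vprod v Aᶜ * ∏ a ∈ A, ∏ b ∈ Aᶜ, (u a - v b)) := by
  have hsign : ∀ a ∈ A, ∀ b ∈ Aᶜ, (if a < b then A.piecewise u v a - A.piecewise u v b
      else A.piecewise u v b - A.piecewise u v a) = (if b < a then -1 else 1) * (u a - v b) := by
    intro a ha b hb
    have hab : a ≠ b := by rintro rfl; exact mem_compl.mp hb ha
    rw [piecewise_eq_of_mem _ _ _ ha, piecewise_eq_of_notMem _ _ _ (mem_compl.mp hb)]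
    rcases hab.lt_or_gt with h | h <;> simp [h, h.not_gt]
  rw [Vprod_univ_eq_mul_compl _ A, Vprod_congr fun a ha => piecewise_eq_of_mem _ _ _ ha,
    Vprod_congr fun a ha => piecewise_eq_of_notMem _ _ _ (mem_compl.mp ha),
    prod_congr rfl fun a ha => prod_congr rfl fun b hb => hsign a ha b hb]
  simp only [prod_mul_distrib, prod_ite, prod_const_one, mul_one, prod_const,
    prod_pow_eq_pow_sum, crossInversions]
  ring

theorem sum_val_eq_choose_add_crossInversions (A : Finset (Fin n)) :
    ∑ a ∈ A, (a : ℕ) = A.card.choose 2 + crossInversions A := by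
  rw [crossInversions, ← sum_card_filter_lt_eq_choose, ← sum_add_distrib]
  refine sum_congr rfl fun a _ => ?_
  rw [← card_union_of_disjoint (disjoint_filter_filter disjoint_compl_right), ← filter_union,
    union_compl, filter_gt_eq_Iio, Fin.card_Iio]

theorem neg_one_zpow_sum_sub_choose_add_card (A : Finset (Fin n)) :
    (-1 : ℂ) ^ ((∑ a ∈ A, (((a : ℕ) : ℤ) + 1)) - (A.card.choose 2 : ℤ) + (n : ℤ)) =
      (-1) ^ #Aᶜ * (-1) ^ crossInversions A := by
  have hexp : (∑ a ∈ A, (((a : ℕ) : ℤ) + 1)) - (A.card.choose 2 : ℤ) + (n : ℤ) =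
      ((#Aᶜ + crossInversions A : ℕ) : ℤ) + 2 * #A := by
    have hsum := sum_val_eq_choose_add_crossInversions A
    have hcompl : #Aᶜ + #A = n := by simp
    rw [sum_add_distrib, sum_const, nsmul_one]
    push_cast
    rw [← Nat.cast_sum, hsum]
    push_cast
    omega
  rw [hexp, zpow_add₀ (by norm_num), zpow_natCast, _root_.zpow_mul, pow_add]
  norm_num

theorem Vprod_add_inv {x : Fin n → ℂ} (hx : ∀ i, x i ≠ 0) :
    Vprod (fun i => x i + (x i)⁻¹) univ =
      Vprod x univ * (∏ i, ∏ j, if i < j then x i - (x j)⁻¹ else 1) *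
        ∏ i : Fin n, x i ^ (((i : ℕ) : ℤ) + 1 - n) := by
  have hterm : ∀ i j : Fin n, (if i < j then x i + (x i)⁻¹ - (x j + (x j)⁻¹) else 1) =
      (if i < j then x i - x j else 1) * (if i < j then x i - (x j)⁻¹ else 1) *
        (if i < j then (x i)⁻¹ else 1) := by
    intro i j
    split_ifs
    · field_simp [hx i, hx j]
      ring
    · simp
  have hpow : ∀ i : Fin n,
      ∏ j, (if i < j then (x i)⁻¹ else 1) = x i ^ (((i : ℕ) : ℤ) + 1 - n) := by
    intro i
    have hexp : ((i : ℕ) : ℤ) + 1 - n = -((n - 1 - i : ℕ) : ℤ) := by omega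
    rw [← prod_filter, filter_lt_eq_Ioi, prod_const, Fin.card_Ioi, hexp, _root_.zpow_neg,
      zpow_natCast, inv_pow]
  simp only [Vprod, hterm, prod_mul_distrib, hpow]

theorem intCast_sub_one_sub_val (t : Fin n) : (n : ℤ) - 1 - (t : ℕ) = (Fin.rev t : ℕ) := by
  rw [Fin.val_rev]; omega

theorem det_soChar2_numerator_rectangle (m : ℕ) {x y : Fin n → ℂ} (hy : ∀ i, y i ^ 2 = x i) :
    (of fun h t : Fin n => y h ^ (2 * (m : ℤ) + 2 * ((n : ℤ) - 1 - ((t : ℕ) : ℤ)) + 1) -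
        y h ^ (-(2 * (m : ℤ) + 2 * ((n : ℤ) - 1 - ((t : ℕ) : ℤ)) + 1))).det =
      ∑ A : Finset (Fin n),
        (-1 : ℂ) ^ ((∑ a ∈ A, (((a : ℕ) : ℤ) + 1)) - (A.card.choose 2 : ℤ) + (n : ℤ)) *
          (∏ a ∈ A, y a) ^ (2 * m + 1) * (∏ a ∈ Aᶜ, (y a)⁻¹) ^ (2 * m + 1) *
          (Vprod x A * Vprod (fun i => (x i)⁻¹) Aᶜ * Rprod x A Aᶜ) := by
  have hentries : (of fun h t : Fin n =>
      y h ^ (2 * (m : ℤ) + 2 * ((n : ℤ) - 1 - ((t : ℕ) : ℤ)) + 1) -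
        y h ^ (-(2 * (m : ℤ) + 2 * ((n : ℤ) - 1 - ((t : ℕ) : ℤ)) + 1))) =
      of fun h t => y h ^ (2 * m + 1) * x h ^ (Fin.rev t : ℕ) +
        -((y h)⁻¹ ^ (2 * m + 1)) * (x h)⁻¹ ^ (Fin.rev t : ℕ) := by
    ext h t
    rw [of_apply, of_apply, intCast_sub_one_sub_val, zpow_odd_sub_zpow_neg (hy h)]
  rw [hentries, det_mul_pow_rev_add_mul_pow_rev]
  refine sum_congr rfl fun A _ => ?_
  rw [prod_piecewise, univ_inter, ← compl_eq_univ_sdiff, prod_neg, prod_pow, prod_pow,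
    Vprod_piecewise, neg_one_zpow_sum_sub_choose_add_card, Rprod]
  ring

theorem det_soChar2_denominator {x y : Fin n → ℂ} (hx : ∀ i, x i ≠ 0)
    (hy : ∀ i, y i ^ 2 = x i) :
    (of fun h t : Fin n => y h ^ (2 * ((n : ℤ) - 1 - ((t : ℕ) : ℤ)) + 1) -
        y h ^ (-(2 * ((n : ℤ) - 1 - ((t : ℕ) : ℤ)) + 1))).det =
      Vprod x univ * (∏ i : Fin n, x i ^ (((i : ℕ) : ℤ) + 1 - n) * (y i - (y i)⁻¹)) *
        (∏ i : Fin n, ∏ j : Fin n, if i < j then x i - (x j)⁻¹ else 1) := by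
  have hy0 : ∀ i, y i ≠ 0 := fun i h0 => hx i (by rw [← hy i, h0, zero_pow two_ne_zero])
  let Q : Matrix (Fin n) (Fin n) ℂ :=
    of fun h t => (laurentSumPoly (Fin.rev t)).eval (x h + (x h)⁻¹)
  have hentries : (of fun h t : Fin n => y h ^ (2 * ((n : ℤ) - 1 - ((t : ℕ) : ℤ)) + 1) -
      y h ^ (-(2 * ((n : ℤ) - 1 - ((t : ℕ) : ℤ)) + 1))) =
      of fun h t => (y h - (y h)⁻¹) * Q h t := by
    ext h t
    have hexp :
        2 * ((n : ℤ) - 1 - ((t : ℕ) : ℤ)) + 1 = ((2 * (Fin.rev t : ℕ) + 1 : ℕ) : ℤ) := by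
      rw [intCast_sub_one_sub_val]; push_cast; ring
    rw [of_apply, of_apply, hexp, _root_.zpow_neg, zpow_natCast,
      ← sub_inv_mul_eval_laurentSumPoly (hy0 h), hy h]
    rfl
  rw [hentries, det_mul_column,
    det_eval_rev_eq_Vprod _ (fun j => (laurentSumPoly_monic_natDegree j).1)
      (fun j => (laurentSumPoly_monic_natDegree j).2),
    Vprod_add_inv hx, prod_mul_distrib]
  ring

end

/-- Elements of `[n]` are represented 0-based, so `Σ_{a∈A} a` becomes `Σ_{a∈A} (a+1)` and
`xᵢ^{-n+i}` becomes `xᵢ^{(i+1)-n}`. -/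
theorem so_rectangle_expansion_general
    (m n : ℕ) (x y : Fin n → ℂ) (hx : ∀ i, x i ≠ 0) (hy : ∀ i, y i ^ 2 = x i) :
    soChar2 (fun _ => (2 * m : ℤ)) y =
      (1 / (Vprod x Finset.univ *
            (∏ i : Fin n, x i ^ (((i : ℕ) : ℤ) + 1 - n) * (y i - (y i)⁻¹)) *
            (∏ i : Fin n, ∏ j : Fin n, if i < j then x i - (x j)⁻¹ else 1))) *
        ∑ A : Finset (Fin n),
          (-1 : ℂ) ^
              ((∑ a ∈ A, (((a : ℕ) : ℤ) + 1)) - (A.card.choose 2 : ℤ) + (n : ℤ)) *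
            (∏ a ∈ A, y a) ^ (2 * m + 1) * (∏ a ∈ Aᶜ, (y a)⁻¹) ^ (2 * m + 1) *
            (Vprod x A * Vprod (fun i => (x i)⁻¹) Aᶜ * Rprod x A Aᶜ) := by
  rw [soChar2, det_soChar2_numerator_rectangle m hy, det_soChar2_denominator hx hy,
    one_div_mul_eq_div]

/-- **Expansion (4.6).**  Expansion of the odd orthogonal character
`so_{(m^n)}(x₁,…,xₙ)` (computed from square roots `y i` of `x i`) as a sum
over subsets `A ⊆ [n]`, with
`D₂(n) = V([n]) · ∏ᵢ xᵢ^{-n+i}(yᵢ - yᵢ⁻¹) · ∏_{i<j}(xᵢ - xⱼ⁻¹)`.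
Elements of `[n]` are represented 0-based, so `Σ_{a∈A} a` becomes
`Σ_{a∈A} (a+1)` and `xᵢ^{-n+i}` becomes `xᵢ^{(i+1)-n}`. -/
theorem so_rectangle_expansion
    (m n : ℕ) (x y : Fin n → ℂ) (hx : ∀ i, x i ≠ 0) (hy : ∀ i, y i ^ 2 = x i)
    (hdist : Function.Injective (pairVars x)) :
    soChar2 (fun _ => (2 * m : ℤ)) y =
      (1 / (Vprod x Finset.univ *
            (∏ i : Fin n, x i ^ (((i : ℕ) : ℤ) + 1 - n) * (y i - (y i)⁻¹)) *
            (∏ i : Fin n, ∏ j : Fin n, if i < j then x i - (x j)⁻¹ else 1))) *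
        ∑ A : Finset (Fin n),
          (-1 : ℂ) ^
              ((∑ a ∈ A, (((a : ℕ) : ℤ) + 1)) - (A.card.choose 2 : ℤ) + (n : ℤ)) *
            (∏ a ∈ A, y a) ^ (2 * m + 1) * (∏ a ∈ Aᶜ, (y a)⁻¹) ^ (2 * m + 1) *
            (Vprod x A * Vprod (fun i => (x i)⁻¹) Aᶜ * Rprod x A Aᶜ) :=
  so_rectangle_expansion_general m n x y hx hy
end

section
/- Let N be a non-negative integer and let x_1,…,x_{2N+1} be nonzero complex numbers with x_1 = 1 or x_1 = −1. Then Σ_{A⊆[2N+1]} (−1)^{N+|A|}·x^{−A}·x^{A^c}·V(A)·V(A^{−1})·V(A^c)·V((A^c)^{−1})·R(A,(A^c)^{−1})·R(A^c,A^{−1}) = 0, where the sum is over all subsets A of [2N+1], A^c denotes the complement of A in [2N+1], x^{−A} = ∏_{a∈A} x_a^{−1}, and x^{A^c} = ∏_{a∈A^c} x_a. (The summands indexed by A and by the symmetric difference A △ {1} cancel each other.) -/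
open Finset

lemma Vprod_insert_zero {M : ℕ} (y : Fin (M + 1) → ℂ) (A : Finset (Fin (M + 1)))
    (h : (0 : Fin (M + 1)) ∉ A) :
    Vprod y (insert 0 A) = (∏ b ∈ A, (y 0 - y b)) * Vprod y A := by
  unfold Vprod
  rw [Finset.prod_insert h]
  have h1 : ∏ b ∈ insert (0 : Fin (M + 1)) A, (if (0 : Fin (M + 1)) < b then y 0 - y b else 1)
      = ∏ b ∈ A, (y 0 - y b) := by
    rw [Finset.prod_insert h, if_neg (lt_irrefl _), one_mul]
    refine Finset.prod_congr rfl fun b hb => ?_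
    rw [if_pos (Fin.pos_of_ne_zero (ne_of_mem_of_not_mem hb h))]
  have h2 : ∀ a ∈ A, ∏ b ∈ insert (0 : Fin (M + 1)) A, (if a < b then y a - y b else 1)
      = ∏ b ∈ A, (if a < b then y a - y b else 1) := by
    intro a ha
    rw [Finset.prod_insert h, if_neg (by exact fun hlt => Fin.not_lt_zero a hlt), one_mul]
  rw [h1, Finset.prod_congr rfl h2]

lemma Rprod_insert_left {M : ℕ} (x : Fin M → ℂ) (a : Fin M) (A B : Finset (Fin M))
    (h : a ∉ A) :
    Rprod x (insert a A) B = (∏ b ∈ B, (x a - (x b)⁻¹)) * Rprod x A B := by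
  unfold Rprod
  rw [Finset.prod_insert h]

lemma Rprod_insert_right {M : ℕ} (x : Fin M → ℂ) (b : Fin M) (A B : Finset (Fin M))
    (h : b ∉ B) :
    Rprod x A (insert b B) = (∏ a ∈ A, (x a - (x b)⁻¹)) * Rprod x A B := by
  unfold Rprod
  rw [← Finset.prod_mul_distrib]
  exact Finset.prod_congr rfl fun a _ => Finset.prod_insert h

noncomputable def lemma3Term (N : ℕ) (x : Fin (2 * N + 1) → ℂ)
    (A : Finset (Fin (2 * N + 1))) : ℂ :=
  (-1 : ℂ) ^ (N + A.card) * ((∏ a ∈ A, (x a)⁻¹) * (∏ a ∈ Aᶜ, x a)) *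
    (Vprod x A * Vprod (fun i => (x i)⁻¹) A * Vprod x Aᶜ *
      Vprod (fun i => (x i)⁻¹) Aᶜ * Rprod x A Aᶜ * Rprod x Aᶜ A)

lemma key (N : ℕ) (x : Fin (2 * N + 1) → ℂ) (hx1 : x 0 = 1 ∨ x 0 = -1)
    (A : Finset (Fin (2 * N + 1))) (h0 : (0 : Fin (2 * N + 1)) ∉ A) :
    lemma3Term N x (insert 0 A) = - lemma3Term N x A := by
  have hε : (x 0)⁻¹ = x 0 := by rcases hx1 with h | h <;> rw [h] <;> norm_num
  set B : Finset (Fin (2 * N + 1)) := Aᶜ.erase 0 with hB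
  have h0B : (0 : Fin (2 * N + 1)) ∉ B := Finset.notMem_erase _ _
  have hAc : Aᶜ = insert 0 B := (Finset.insert_erase (Finset.mem_compl.2 h0)).symm
  have hA'c : (insert (0 : Fin (2 * N + 1)) A)ᶜ = B := by rw [Finset.compl_insert]
  have hcard : (insert (0 : Fin (2 * N + 1)) A).card = A.card + 1 :=
    Finset.card_insert_of_notMem h0
  have hcards : A.card + B.card = 2 * N := by
    have h1 : Aᶜ.card = 2 * N + 1 - A.card := by
      rw [Finset.card_compl, Fintype.card_fin]
    have h2 : B.card = Aᶜ.card - 1 := Finset.card_erase_of_mem (Finset.mem_compl.2 h0)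
    have h3 : A.card < 2 * N + 1 := by
      have hss : A ⊂ Finset.univ :=
        Finset.ssubset_univ_iff.2 (fun h => h0 (h.symm ▸ Finset.mem_univ 0))
      have := Finset.card_lt_card hss
      simpa [Finset.card_univ, Fintype.card_fin] using this
    omega
  have hsign : (-1 : ℂ) ^ A.card * (-1 : ℂ) ^ B.card = 1 := by
    rw [← pow_add, hcards, pow_mul]; norm_num
  have H : (∏ a ∈ A, (x 0 - x a)) * (∏ b ∈ B, (x b - x 0))
      = (∏ a ∈ A, (x a - x 0)) * (∏ b ∈ B, (x 0 - x b)) := by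
    have e1 : (∏ a ∈ A, (x 0 - x a)) = (-1 : ℂ) ^ A.card * ∏ a ∈ A, (x a - x 0) := by
      rw [← Finset.prod_const, ← Finset.prod_mul_distrib]
      exact Finset.prod_congr rfl fun a _ => by ring
    have e2 : (∏ b ∈ B, (x b - x 0)) = (-1 : ℂ) ^ B.card * ∏ b ∈ B, (x 0 - x b) := by
      rw [← Finset.prod_const, ← Finset.prod_mul_distrib]
      exact Finset.prod_congr rfl fun b _ => by ring
    rw [e1, e2]
    linear_combination (∏ a ∈ A, (x a - x 0)) * (∏ b ∈ B, (x 0 - x b)) * hsign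
  unfold lemma3Term
  rw [hA'c, hcard, hAc]
  rw [Vprod_insert_zero x A h0, Vprod_insert_zero (fun i => (x i)⁻¹) A h0,
      Vprod_insert_zero x B h0B, Vprod_insert_zero (fun i => (x i)⁻¹) B h0B,
      Rprod_insert_left x 0 A B h0, Rprod_insert_right x 0 B A h0,
      Rprod_insert_right x 0 A B h0B, Rprod_insert_left x 0 B A h0B,
      Finset.prod_insert h0, Finset.prod_insert h0B]
  simp only [hε]
  rw [show N + (A.card + 1) = (N + A.card) + 1 from rfl, pow_succ]
  linear_combination (-((-1 : ℂ) ^ (N + A.card) * x 0 * (∏ a ∈ A, (x a)⁻¹) *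
    (∏ a ∈ B, x a) * Vprod x A * Vprod (fun i => (x i)⁻¹) A * Vprod x B *
    Vprod (fun i => (x i)⁻¹) B * (∏ a ∈ A, (x 0 - (x a)⁻¹)) *
    (∏ b ∈ B, (x 0 - (x b)⁻¹)) * Rprod x A B * Rprod x B A)) * H
/-- If `x₁ = 1` or `x₁ = -1`, then the right-hand side sum of Lemma 3
vanishes:  `Σ_{A⊆[2N+1]} (-1)^{N+|A|} x^{-A} x^{Aᶜ}
V(A)V(A⁻¹)V(Aᶜ)V((Aᶜ)⁻¹)R(A,(Aᶜ)⁻¹)R(Aᶜ,A⁻¹) = 0`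
(the summands indexed by `A` and by `A △ {1}` cancel each other). -/
theorem lemma_three_rhs_vanishes_at_pm_one (N : ℕ) (x : Fin (2 * N + 1) → ℂ)
    (hx : ∀ i, x i ≠ 0) (hx1 : x 0 = 1 ∨ x 0 = -1) :
    ∑ A : Finset (Fin (2 * N + 1)),
        (-1 : ℂ) ^ (N + A.card) * ((∏ a ∈ A, (x a)⁻¹) * (∏ a ∈ Aᶜ, x a)) *
          (Vprod x A * Vprod (fun i => (x i)⁻¹) A * Vprod x Aᶜ *
            Vprod (fun i => (x i)⁻¹) Aᶜ * Rprod x A Aᶜ * Rprod x Aᶜ A) = 0 := by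
  have : ∑ A : Finset (Fin (2 * N + 1)), lemma3Term N x A = 0 := by
    apply Finset.sum_ninvolution
      (fun A => if (0 : Fin (2 * N + 1)) ∈ A then A.erase 0 else insert 0 A)
    · intro A
      by_cases h : (0 : Fin (2 * N + 1)) ∈ A
      · rw [if_pos h]
        have h0 : (0 : Fin (2 * N + 1)) ∉ A.erase 0 := Finset.notMem_erase _ _
        have h2 := key N x hx1 (A.erase 0) h0
        rw [Finset.insert_erase h] at h2
        rw [h2]; ring
      · rw [if_neg h, key N x hx1 A h]; ring
    · intro A _
      by_cases h : (0 : Fin (2 * N + 1)) ∈ A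
      · rw [if_pos h]
        exact fun heq => (Finset.notMem_erase 0 A) (heq.symm ▸ h)
      · rw [if_neg h]
        exact fun heq => h (heq ▸ Finset.mem_insert_self 0 A)
    · intro A; exact Finset.mem_univ _
    · intro A
      by_cases h : (0 : Fin (2 * N + 1)) ∈ A
      · rw [if_pos h, if_neg (Finset.notMem_erase _ _), Finset.insert_erase h]
      · rw [if_neg h, if_pos (Finset.mem_insert_self _ _), Finset.erase_insert h]
  simpa [lemma3Term] using this
end

section
/- Let m and N be non-negative integers. For real q > 1, the denominator determinant det_{1≤h,t≤N}((q^h)^{N−t+1} − (q^h)^{−(N−t+1)}) is nonzero, so sp_{(m^N)}(q, q^2, …, q^N) is defined by the determinant formula. Then, as q tends to 1 from above, sp_{(m^N)}(q, q^2, …, q^N) tends to ∏_{1≤h<t≤N+1} (2m+2N+3−h−t)/(2N+3−h−t). -/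
open Matrix Finset Filter

/-!
Put `x_h = q^(h+1)`. An entry `x_h^e - x_h^(-e)` equals `w^(h+1) - w^(-(h+1))` with `w = q^e`,
and `w^(n+1) - w^(-(n+1)) = (w - w⁻¹) S_n(w + w⁻¹)` for the monic Chebyshev polynomials `S_n`. So
both determinants are Vandermonde determinants in the `w_t + w_t⁻¹`, times `∏ (w_t - w_t⁻¹)`.
With exponents `a_t = N - t` in the denominator and `m + a_t` in the numerator, the factors pair
up over `t ≤ t'` into `q^(-m) (q^(A+2m) - 1) / (q^A - 1)` with `A = a_t + a_t'`, which tends to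
`(A + 2m) / A` as `q → 1`.
-/

open Polynomial Topology

namespace Polynomial.Chebyshev

variable (R : Type*) [CommRing R] [Nontrivial R]

theorem degree_S_natCast (n : ℕ) : (S R n).degree = n := by
  induction n using Nat.twoStepInduction with
  | zero => simp
  | one => simp
  | more n ih1 ih2 =>
    push_cast at ih2 ⊢
    have hX : (X * S R (n + 1)).degree = ↑(n + 2) := by
      rw [mul_comm, degree_mul_X, ih2]; norm_cast
    rw [S_add_two, degree_sub_eq_left_of_degree_lt]
    · rw [hX]; norm_cast
    · rw [ih1, hX]; norm_cast; omega

theorem monic_S_natCast (n : ℕ) : (S R n).Monic := by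
  induction n using Nat.twoStepInduction with
  | zero => simp
  | one => simp
  | more n ih1 ih2 =>
    push_cast at ih2 ⊢
    rw [S_add_two]
    refine (monic_X.mul ih2).sub_of_left ?_
    rw [mul_comm, degree_mul_X, ← Nat.cast_one (R := ℤ), ← Nat.cast_add, degree_S_natCast,
      degree_S_natCast]
    norm_cast; omega

theorem sub_inv_mul_S_eval_add_inv {K : Type*} [Field K] {w : K} (hw : w ≠ 0) (n : ℕ) :
    (w - w⁻¹) * (S K n).eval (w + w⁻¹) = w ^ (n + 1) - w⁻¹ ^ (n + 1) := by
  induction n using Nat.twoStepInduction with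
  | zero => simp
  | one => simp only [Nat.cast_one, S_one, eval_X, inv_pow]; field_simp; ring
  | more n ih1 ih2 =>
    push_cast at ih2 ⊢
    rw [S_add_two, eval_sub, eval_mul, eval_X, mul_sub, mul_left_comm, ih2, ih1]
    simp only [inv_pow]
    field_simp
    ring

end Polynomial.Chebyshev

section Field

variable {K : Type*} [Field K]

def weylDenom {N : ℕ} (w : Fin N → K) : K :=
  (∏ j, (w j - (w j)⁻¹)) * ∏ i, ∏ j ∈ Ioi i, ((w j + (w j)⁻¹) - (w i + (w i)⁻¹))

theorem det_pow_sub_inv_pow {N : ℕ} {w : Fin N → K} (hw : ∀ j, w j ≠ 0) :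
    (of fun i j : Fin N => w j ^ ((i : ℕ) + 1) - (w j)⁻¹ ^ ((i : ℕ) + 1)).det = weylDenom w := by
  set P : Fin N → K[X] := fun i => Chebyshev.S K (i : ℕ)
  calc _ = (of fun i j : Fin N => (w j - (w j)⁻¹) * (P i).eval (w j + (w j)⁻¹)).det := by
        congr; ext i j; exact (Chebyshev.sub_inv_mul_S_eval_add_inv (hw j) i).symm
    _ = (∏ j, (w j - (w j)⁻¹)) * (of fun i j : Fin N => (P i).eval (w j + (w j)⁻¹)).det :=
        det_mul_row _ _
    _ = weylDenom w := by
      rw [← det_transpose, weylDenom, ← det_vandermonde]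
      congr 1
      exact (det_eval_matrixOfPolynomials_eq_det_vandermonde _ P
        (fun i => natDegree_eq_of_degree_eq_some (Chebyshev.degree_S_natCast K i))
        (fun i => Chebyshev.monic_S_natCast K i)).symm

theorem det_pow_zpow_sub_zpow_neg {N : ℕ} {y : K} (hy : y ≠ 0) {E : Fin N → ℤ} {e : Fin N → ℕ}
    (hE : ∀ t, E t = e t) :
    (of fun h t : Fin N => (y ^ ((h : ℕ) + 1)) ^ E t - (y ^ ((h : ℕ) + 1)) ^ (-E t)).det =
      weylDenom (fun t => y ^ e t) := by
  rw [← det_pow_sub_inv_pow fun t => pow_ne_zero _ hy]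
  congr
  ext h t
  simp only [hE, _root_.zpow_neg, zpow_natCast, inv_pow, ← pow_mul, mul_comm]

def qRatio (x : K) (m A : ℕ) : K := (x ^ (A + 2 * m) - 1) / (x ^ m * (x ^ A - 1))

theorem pow_mul_pow_sub_inv_pow {y : K} (hy : y ≠ 0) (k : ℕ) :
    y ^ k * (y ^ k - (y ^ k)⁻¹) = y ^ (k + k) - 1 := by
  rw [mul_sub, mul_inv_cancel₀ (pow_ne_zero k hy), pow_add]

theorem pow_mul_pow_add_inv_sub {y : K} (hy : y ≠ 0) (k l : ℕ) :
    y ^ (k + l) * ((y ^ l + (y ^ l)⁻¹) - (y ^ k + (y ^ k)⁻¹)) =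
      (y ^ l - y ^ k) * (y ^ (k + l) - 1) := by
  have hk := pow_ne_zero k hy
  have hl := pow_ne_zero l hy
  rw [pow_add]
  field_simp
  ring

section PowInjective

variable {y : K} (hy : Function.Injective (y ^ · : ℕ → K))
include hy

theorem ne_zero_of_pow_injective : y ≠ 0 := by
  rintro rfl
  exact absurd (@hy 1 2 (by simp)) (by decide)

theorem pow_ne_one_of_pow_injective {n : ℕ} (hn : n ≠ 0) : y ^ n ≠ 1 :=
  fun h => hn (@hy n 0 (by simpa using h))

theorem pow_sub_inv_pow_ne_zero {k : ℕ} (hk : k ≠ 0) : y ^ k - (y ^ k)⁻¹ ≠ 0 := by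
  intro h
  apply pow_ne_one_of_pow_injective hy (n := k + k) (by omega)
  rw [← sub_eq_zero, ← pow_mul_pow_sub_inv_pow (ne_zero_of_pow_injective hy), h, mul_zero]

theorem pow_add_inv_sub_ne_zero {k l : ℕ} (hkl : k ≠ l) :
    (y ^ l + (y ^ l)⁻¹) - (y ^ k + (y ^ k)⁻¹) ≠ 0 := by
  have hpow : y ^ l - y ^ k ≠ 0 := sub_ne_zero.mpr fun h => hkl (hy h).symm
  have hone : y ^ (k + l) - 1 ≠ 0 := sub_ne_zero.mpr (pow_ne_one_of_pow_injective hy (by omega))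
  intro h
  apply mul_ne_zero hpow hone
  rw [← pow_mul_pow_add_inv_sub (ne_zero_of_pow_injective hy), h, mul_zero]

theorem pow_sub_inv_pow_div (m : ℕ) {k : ℕ} (hk : k ≠ 0) :
    (y ^ (m + k) - (y ^ (m + k))⁻¹) / (y ^ k - (y ^ k)⁻¹) = qRatio y m (k + k) := by
  have h0 := ne_zero_of_pow_injective hy
  have hone : y ^ (k + k) - 1 ≠ 0 := sub_ne_zero.mpr (pow_ne_one_of_pow_injective hy (by omega))
  have hnum := pow_mul_pow_sub_inv_pow h0 (m + k)
  have hden := pow_mul_pow_sub_inv_pow h0 k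
  rw [qRatio, div_eq_div_iff (pow_sub_inv_pow_ne_zero hy hk)
    (mul_ne_zero (pow_ne_zero m h0) hone)]
  linear_combination (-(y ^ (m + k) - (y ^ (m + k))⁻¹) * y ^ m) * hden +
    (y ^ k - (y ^ k)⁻¹) * hnum

theorem pow_add_inv_sub_div (m : ℕ) {k l : ℕ} (hkl : k ≠ l) :
    ((y ^ (m + l) + (y ^ (m + l))⁻¹) - (y ^ (m + k) + (y ^ (m + k))⁻¹)) /
      ((y ^ l + (y ^ l)⁻¹) - (y ^ k + (y ^ k)⁻¹)) = qRatio y m (k + l) := by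
  have h0 := ne_zero_of_pow_injective hy
  have hone : y ^ (k + l) - 1 ≠ 0 := sub_ne_zero.mpr (pow_ne_one_of_pow_injective hy (by omega))
  have hnum := pow_mul_pow_add_inv_sub h0 (m + k) (m + l)
  have hden := pow_mul_pow_add_inv_sub h0 k l
  rw [qRatio, div_eq_div_iff (pow_add_inv_sub_ne_zero hy hkl)
    (mul_ne_zero (pow_ne_zero m h0) hone)]
  refine mul_left_cancel₀ (pow_ne_zero (m + k + (m + l)) h0) ?_
  linear_combination (y ^ m * (y ^ (k + l) - 1)) * hnum -
    (y ^ (2 * m) * (y ^ (k + l + 2 * m) - 1)) * hden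

variable {N : ℕ} {e : Fin N → ℕ} (he : Function.Injective e) (he0 : ∀ t, e t ≠ 0)
include he he0

theorem weylDenom_pow_ne_zero : weylDenom (fun t => y ^ e t) ≠ 0 := by
  refine mul_ne_zero (prod_ne_zero_iff.mpr fun t _ => pow_sub_inv_pow_ne_zero hy (he0 t))
    (prod_ne_zero_iff.mpr fun t _ => prod_ne_zero_iff.mpr fun t' ht' => ?_)
  exact pow_add_inv_sub_ne_zero hy (he.ne (mem_Ioi.mp ht').ne)

theorem weylDenom_pow_add_div (m : ℕ) :
    weylDenom (fun t => y ^ (m + e t)) / weylDenom (fun t => y ^ e t) =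
      ∏ t, ∏ t' ∈ Ici t, qRatio y m (e t + e t') := by
  simp only [weylDenom, Ici_eq_cons_Ioi, prod_cons, prod_mul_distrib, mul_div_mul_comm,
    ← prod_div_distrib]
  congr 1
  · exact prod_congr rfl fun t _ => pow_sub_inv_pow_div hy m (he0 t)
  · exact prod_congr rfl fun t _ => prod_congr rfl fun t' ht' =>
      pow_add_inv_sub_div hy m (he.ne (mem_Ioi.mp ht').ne)

end PowInjective

end Field

theorem tendsto_qRatio {𝕜 : Type*} [NormedField 𝕜] [CharZero 𝕜] (m : ℕ) {A : ℕ} (hA : A ≠ 0) :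
    Tendsto (fun x : 𝕜 => qRatio x m A) (𝓝[≠] 1) (𝓝 (((A + 2 * m : ℕ) : 𝕜) / A)) := by
  have hgeom (n : ℕ) : Tendsto (fun x : 𝕜 => ∑ i ∈ range n, x ^ i) (𝓝 1) (𝓝 n) := by
    simpa using (continuous_finsetSum (range n) fun i _ => continuous_pow i).tendsto (1 : 𝕜)
  have hlim : Tendsto (fun x : 𝕜 => (x ^ m)⁻¹ * (∑ i ∈ range (A + 2 * m), x ^ i) /
      ∑ i ∈ range A, x ^ i) (𝓝 1) (𝓝 (((A + 2 * m : ℕ) : 𝕜) / A)) := by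
    have := ((((continuous_pow m).tendsto (1 : 𝕜)).inv₀ (by simp)).mul
      (hgeom (A + 2 * m))).div (hgeom A) (Nat.cast_ne_zero.mpr hA)
    rwa [one_pow, inv_one, one_mul] at this
  refine (hlim.mono_left nhdsWithin_le_nhds).congr' ?_
  filter_upwards [self_mem_nhdsWithin] with x hx
  rw [qRatio, ← geom_sum_mul, ← geom_sum_mul, ← mul_assoc,
    mul_div_mul_right _ _ (sub_ne_zero.mpr hx)]
  ring

theorem Complex.tendsto_ofReal_nhdsGT_nhdsNE (a : ℝ) :
    Tendsto (fun q : ℝ => (q : ℂ)) (𝓝[>] a) (𝓝[≠] (a : ℂ)) :=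
  tendsto_nhdsWithin_iff.mpr ⟨Complex.continuous_ofReal.continuousWithinAt.tendsto,
    eventually_nhdsWithin_of_forall fun q hq => by simpa using (Set.mem_Ioi.mp hq).ne'⟩

theorem Complex.ofReal_pow_injective {q : ℝ} (h0 : 0 < q) (h1 : q ≠ 1) :
    Function.Injective ((q : ℂ) ^ · : ℕ → ℂ) := fun a b hab =>
  pow_right_injective₀ h0 h1 (Complex.ofReal_injective (by push_cast; exact hab))

theorem spDen_pow {N : ℕ} {y : ℂ} (hy : y ≠ 0) :
    spDen (fun h : Fin N => y ^ ((h : ℕ) + 1)) = weylDenom (fun t : Fin N => y ^ (N - (t : ℕ))) :=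
  det_pow_zpow_sub_zpow_neg hy fun t => by omega

theorem spChar_const_pow {N : ℕ} (m : ℕ) {y : ℂ} (hy : y ≠ 0) :
    spChar (fun _ => (m : ℤ)) (fun h : Fin N => y ^ ((h : ℕ) + 1)) =
      weylDenom (fun t : Fin N => y ^ (m + (N - (t : ℕ)))) /
        weylDenom (fun t : Fin N => y ^ (N - (t : ℕ))) := by
  rw [spChar, det_pow_zpow_sub_zpow_neg hy (e := fun t => m + (N - (t : ℕ))) fun t => by omega]
  exact congrArg _ (spDen_pow hy)

theorem Fin.prod_prod_ite_lt {M : Type*} [CommMonoid M] {N : ℕ}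
    (f : Fin (N + 1) → Fin (N + 1) → M) :
    ∏ h, ∏ t, (if h < t then f h t else 1) = ∏ u : Fin N, ∏ v ∈ Ici u, f u.castSucc v.succ := by
  rw [Fin.prod_univ_castSucc]
  simp [Fin.prod_univ_succ (n := N), ← prod_filter, filter_le_eq_Ici,
    fun a : Fin (N + 1) => (Fin.le_last a).not_gt]

/-- For `q > 1`, the denominator determinant of the symplectic character at
the variables `q, q², …, q^N` is nonzero, and
`sp_{(m^N)}(q,q²,…,q^N)` tends, as `q → 1⁺`, to
`∏_{1≤h<t≤N+1} (2m+2N+3-h-t)/(2N+3-h-t)`. -/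
theorem sp_q_powers_limit (m N : ℕ) :
    (∀ q : ℝ, 1 < q → spDen (fun h : Fin N => ((q : ℂ)) ^ ((h : ℕ) + 1)) ≠ 0) ∧
      Tendsto
        (fun q : ℝ => spChar (fun _ => (m : ℤ)) (fun h : Fin N => ((q : ℂ)) ^ ((h : ℕ) + 1)))
        (nhdsWithin (1 : ℝ) (Set.Ioi 1))
        (nhds
          (∏ h : Fin (N + 1), ∏ t : Fin (N + 1),
            if h < t then
              (((2 * m + 2 * N + 3 : ℤ) - ((h : ℕ) + 1) - ((t : ℕ) + 1) : ℤ) : ℂ) /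
                (((2 * N + 3 : ℤ) - ((h : ℕ) + 1) - ((t : ℕ) + 1) : ℤ) : ℂ)
            else 1)) := by
  set e : Fin N → ℕ := fun t => N - t with he_def
  have he : Function.Injective e := fun s t hst => by simp only [he_def] at hst; omega
  have he0 (t : Fin N) : e t ≠ 0 := by simp only [he_def]; omega
  have hpow {q : ℝ} (hq : 1 < q) := Complex.ofReal_pow_injective (by linarith) hq.ne'
  refine ⟨fun q hq => ?_, ?_⟩
  · rw [spDen_pow (ne_zero_of_pow_injective (hpow hq))]
    exact weylDenom_pow_ne_zero (hpow hq) he he0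
  have hchar : ∀ᶠ q : ℝ in 𝓝[>] 1, ∏ t, ∏ t' ∈ Ici t, qRatio (q : ℂ) m (e t + e t') =
      spChar (fun _ => (m : ℤ)) (fun h : Fin N => ((q : ℂ)) ^ ((h : ℕ) + 1)) := by
    filter_upwards [self_mem_nhdsWithin] with q hq
    rw [spChar_const_pow m (ne_zero_of_pow_injective (hpow hq)),
      weylDenom_pow_add_div (hpow hq) he he0]
  have hlim := tendsto_finsetProd univ fun t _ => tendsto_finsetProd (Ici t) fun t' _ =>
    (tendsto_qRatio m (by have := he0 t; omega : e t + e t' ≠ 0)).comp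
      (Complex.tendsto_ofReal_nhdsGT_nhdsNE 1)
  refine (hlim.congr' hchar).trans (le_of_eq (congrArg nhds ?_))
  rw [Fin.prod_prod_ite_lt]
  refine prod_congr rfl fun t _ => prod_congr rfl fun t' _ => ?_
  simp only [he_def, Fin.val_castSucc, Fin.val_succ]
  congr 1 <;> rw [← Int.cast_natCast] <;> congr 1 <;> omega
end

section
/- Let m and n be non-negative integers. For real q > 1, the denominator determinant det_{1≤h,t≤n}((q^{h−1})^{n−t} + (q^{h−1})^{−(n−t)}) is nonzero, so o^{even}_{(m^n)}(1, q, q^2, …, q^{n−1}) is defined by the determinant formula. Then, as q tends to 1 from above, o^{even}_{(m^n)}(1, q, q^2, …, q^{n−1}) tends to 2 · ∏_{1≤h<t≤n} (2m+2n−h−t)/(2n−h−t). -/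
open Matrix Finset Filter

/-- The denominator determinant of the even orthogonal character. -/
noncomputable def oevenDenX {N : ℕ} (x : Fin N → ℂ) : ℂ :=
  Matrix.det (Matrix.of fun h t : Fin N =>
    x h ^ ((N : ℤ) - 1 - ((t : ℕ) : ℤ)) + x h ^ (-((N : ℤ) - 1 - ((t : ℕ) : ℤ))))

lemma dickson_deg : ∀ k : ℕ, (Polynomial.dickson 1 (1:ℂ) k).degree = k ∧
    (k = 0 ∨ (Polynomial.dickson 1 (1:ℂ) k).Monic)
  | 0 => by
      rw [Polynomial.dickson_zero]
      refine ⟨?_, Or.inl rfl⟩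
      rw [Nat.cast_one, show ((3:Polynomial ℂ) - 1) = Polynomial.C 2 by rw [map_ofNat]; norm_num,
        Polynomial.degree_C two_ne_zero]
      rfl
  | 1 => by
      rw [Polynomial.dickson_one]
      exact ⟨Polynomial.degree_X, Or.inr Polynomial.monic_X⟩
  | (k+2) => by
      obtain ⟨hd1, hm1⟩ := dickson_deg (k+1)
      obtain ⟨hd0, _⟩ := dickson_deg k
      have hm1' : (Polynomial.dickson 1 (1:ℂ) (k+1)).Monic := by
        rcases hm1 with h | h
        · omega
        · exact h
      rw [Polynomial.dickson_add_two]
      have hmul : (Polynomial.X * Polynomial.dickson 1 (1:ℂ) (k+1)).Monic :=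
        Polynomial.monic_X.mul hm1'
      have hdmul : (Polynomial.X * Polynomial.dickson 1 (1:ℂ) (k+1)).degree
          = ((k+2 : ℕ) : WithBot ℕ) := by
        rw [Polynomial.degree_mul, Polynomial.degree_X, hd1]
        push_cast
        ring
      have hlt : (Polynomial.C (1:ℂ) * Polynomial.dickson 1 (1:ℂ) k).degree
          < (Polynomial.X * Polynomial.dickson 1 (1:ℂ) (k+1)).degree := by
        rw [hdmul, Polynomial.C_1, one_mul, hd0]
        exact_mod_cast Nat.lt_succ_of_lt (Nat.lt_succ_self k)
      refine ⟨?_, Or.inr (hmul.sub_of_left hlt)⟩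
      rw [Polynomial.degree_sub_eq_left_of_degree_lt hlt, hdmul]

open Polynomial in
lemma det_pow_add_inv_pow {N : ℕ} (hN : 0 < N) (z : Fin N → ℂ) (hz : ∀ t, z t * (z t)⁻¹ = 1) :
    Matrix.det (Matrix.of fun t h : Fin N => z t ^ (h:ℕ) + (z t)⁻¹ ^ (h:ℕ)) =
      2 * ∏ i : Fin N, ∏ j ∈ Finset.Ioi i,
        ((z j + (z j)⁻¹) - (z i + (z i)⁻¹)) := by
  set w : Fin N → ℂ := fun t => z t + (z t)⁻¹ with hw
  set p : Fin N → Polynomial ℂ :=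
    fun h => if (h:ℕ) = 0 then 1 else Polynomial.dickson 1 1 (h:ℕ) with hp
  have hdeg : ∀ i : Fin N, (p i).natDegree = (i:ℕ) := by
    intro i
    by_cases h : (i:ℕ) = 0
    · simp [hp, h]
    · simp only [hp, h, if_false]
      exact Polynomial.natDegree_eq_of_degree_eq_some (dickson_deg (i:ℕ)).1
  have hmon : ∀ i : Fin N, (p i).Monic := by
    intro i
    by_cases h : (i:ℕ) = 0
    · simp [hp, h, Polynomial.monic_one]
    · simp only [hp, h, if_false]
      rcases (dickson_deg (i:ℕ)).2 with h' | h'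
      · exact absurd h' h
      · exact h'
  have key : Matrix.det (Matrix.of fun t h : Fin N => ((p h).eval (w t))) =
      ∏ i : Fin N, ∏ j ∈ Finset.Ioi i, (w j - w i) := by
    rw [← Matrix.det_eval_matrixOfPolynomials_eq_det_vandermonde w p hdeg hmon,
      Matrix.det_vandermonde]
  let j0 : Fin N := ⟨0, hN⟩
  have hM : (Matrix.of fun t h : Fin N => z t ^ (h:ℕ) + (z t)⁻¹ ^ (h:ℕ)) =
      Matrix.updateCol (Matrix.of fun t h : Fin N => ((p h).eval (w t))) j0
        ((2:ℂ) • fun _ => (1:ℂ)) := by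
    ext t h
    by_cases hh : h = j0
    · subst hh
      rw [Matrix.updateCol_apply]
      simp only [if_pos rfl]
      simp [j0]
      norm_num
    · rw [Matrix.updateCol_apply, if_neg hh]
      have hh0 : (h:ℕ) ≠ 0 := fun hc => hh (Fin.ext hc)
      simp only [Matrix.of_apply, hp, hh0, if_false]
      rw [Polynomial.dickson_one_one_eval_add_inv (z t) (z t)⁻¹ (hz t)]
  rw [hM, Matrix.det_updateCol_smul]
  have huc : Matrix.updateCol (Matrix.of fun t h : Fin N => ((p h).eval (w t))) j0
      (fun _ => (1:ℂ)) = (Matrix.of fun t h : Fin N => ((p h).eval (w t))) := by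
    ext t h
    rw [Matrix.updateCol_apply]
    by_cases hh : h = j0
    · subst hh; simp [j0, hp]
    · rw [if_neg hh]
  rw [huc, key]

lemma det_qpow {n : ℕ} (hn : 0 < n) (Q : ℂ) (hQ : Q ≠ 0) (E : Fin n → ℤ) (e : Fin n → ℕ)
    (hEe : ∀ t, E t = (e t : ℤ)) :
    Matrix.det (Matrix.of fun h t : Fin n =>
        (Q ^ (h:ℕ)) ^ (E t) + (Q ^ (h:ℕ)) ^ (-E t)) =
      2 * ∏ i : Fin n, ∏ j ∈ Finset.Ioi i,
        ((Q^(e j) + (Q^(e j))⁻¹) - (Q^(e i) + (Q^(e i))⁻¹)) := by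
  have hT : (Matrix.of fun h t : Fin n => (Q ^ (h:ℕ)) ^ (E t) + (Q ^ (h:ℕ)) ^ (-E t)) =
      (Matrix.of fun t h : Fin n => (Q^(e t)) ^ (h:ℕ) + ((Q^(e t))⁻¹) ^ (h:ℕ))ᵀ := by
    ext h t
    simp only [Matrix.transpose_apply, Matrix.of_apply]
    rw [hEe t, _root_.zpow_neg, zpow_natCast, ← pow_mul, ← pow_mul, inv_pow, mul_comm, pow_mul]
  rw [hT, Matrix.det_transpose]
  exact det_pow_add_inv_pow hn (fun t => Q ^ (e t))
    (fun t => mul_inv_cancel₀ (pow_ne_zero _ hQ))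

lemma add_inv_lt_add_inv {A B : ℝ} (hB : 1 ≤ B) (hBA : B < A) :
    B + B⁻¹ < A + A⁻¹ := by
  have hB0 : (0:ℝ) < B := lt_of_lt_of_le one_pos hB
  have hA0 : (0:ℝ) < A := hB0.trans hBA
  have hA1 : (1:ℝ) < A := lt_of_le_of_lt hB hBA
  have h1 : A * A⁻¹ = 1 := mul_inv_cancel₀ hA0.ne'
  have h2 : B * B⁻¹ = 1 := mul_inv_cancel₀ hB0.ne'
  have hAi : A⁻¹ < 1 := inv_lt_one_of_one_lt₀ hA1
  have hBi : B⁻¹ ≤ 1 := inv_le_one_of_one_le₀ hB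
  have hBi0 : 0 < B⁻¹ := inv_pos.2 hB0
  have hlt1 : A⁻¹ * B⁻¹ < 1 := by nlinarith
  have key : 0 < (A - B) * (1 - A⁻¹ * B⁻¹) :=
    mul_pos (sub_pos.2 hBA) (sub_pos.2 hlt1)
  nlinarith [key, h1, h2]

lemma pair_ratio (Q : ℂ) (hQ0 : Q ≠ 0) (hQ1 : Q ≠ 1) (m bj d : ℕ)
    (hne : Q^bj + (Q^bj)⁻¹ - (Q^(bj+d) + (Q^(bj+d))⁻¹) ≠ 0)
    (hgs : (∑ k ∈ range (bj + (bj+d)), Q^k) ≠ 0) :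
    (Q^(m+bj) + (Q^(m+bj))⁻¹ - (Q^(m+(bj+d)) + (Q^(m+(bj+d)))⁻¹)) /
      (Q^bj + (Q^bj)⁻¹ - (Q^(bj+d) + (Q^(bj+d))⁻¹)) =
    (∑ k ∈ range ((m+bj) + (m+(bj+d))), Q^k) /
      (Q^m * ∑ k ∈ range (bj + (bj+d)), Q^k) := by
  have hQm : Q^m ≠ 0 := pow_ne_zero _ hQ0
  have h1 : Q - 1 ≠ 0 := sub_ne_zero.2 hQ1
  rw [div_eq_div_iff hne (mul_ne_zero hQm hgs)]
  apply mul_right_cancel₀ h1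
  set wa := Q^(m+bj) + (Q^(m+bj))⁻¹ - (Q^(m+(bj+d)) + (Q^(m+(bj+d)))⁻¹) with hwa
  set wb := Q^bj + (Q^bj)⁻¹ - (Q^(bj+d) + (Q^(bj+d))⁻¹) with hwb
  calc wa * (Q^m * ∑ k ∈ range (bj + (bj+d)), Q^k) * (Q - 1)
      = wa * Q^m * ((∑ k ∈ range (bj + (bj+d)), Q^k) * (Q - 1)) := by ring
    _ = wa * Q^m * (Q^(bj + (bj+d)) - 1) := by rw [geom_sum_mul]
    _ = wb * (Q^((m+bj) + (m+(bj+d))) - 1) := by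
        rw [hwa, hwb]
        field_simp
        ring
    _ = wb * ((∑ k ∈ range ((m+bj) + (m+(bj+d))), Q^k) * (Q - 1)) := by rw [geom_sum_mul]
    _ = (∑ k ∈ range ((m+bj) + (m+(bj+d))), Q^k) * wb * (Q - 1) := by ring

lemma G_tendsto (m s r : ℕ) (hr : r ≠ 0) :
    Tendsto (fun q : ℝ => (∑ k ∈ range s, (q:ℂ)^k) /
        ((q:ℂ)^m * ∑ k ∈ range r, (q:ℂ)^k))
      (nhdsWithin (1:ℝ) (Set.Ioi 1)) (nhds ((s:ℂ)/(r:ℂ))) := by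
  have hbase : Tendsto (fun q : ℝ => (q:ℂ)) (nhdsWithin (1:ℝ) (Set.Ioi 1)) (nhds 1) := by
    have h : Tendsto (fun q : ℝ => (q:ℂ)) (nhdsWithin (1:ℝ) (Set.Ioi 1)) (nhds ((1:ℝ):ℂ)) :=
      (Complex.continuous_ofReal.tendsto 1).mono_left nhdsWithin_le_nhds
    simpa using h
  have hnum : Tendsto (fun q : ℝ => ∑ k ∈ range s, (q:ℂ)^k)
      (nhdsWithin (1:ℝ) (Set.Ioi 1)) (nhds (s:ℂ)) := by
    have h := tendsto_finset_sum (range s)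
      (fun k (_ : k ∈ range s) =>
        (hbase.pow k : Tendsto (fun q:ℝ => (q:ℂ)^k) _ (nhds (1^k))))
    simpa using h
  have hden : Tendsto (fun q : ℝ => (q:ℂ)^m * ∑ k ∈ range r, (q:ℂ)^k)
      (nhdsWithin (1:ℝ) (Set.Ioi 1)) (nhds (r:ℂ)) := by
    have h2 : Tendsto (fun q : ℝ => ∑ k ∈ range r, (q:ℂ)^k)
        (nhdsWithin (1:ℝ) (Set.Ioi 1)) (nhds (r:ℂ)) := by
      have h := tendsto_finset_sum (range r)
        (fun k (_ : k ∈ range r) =>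
          (hbase.pow k : Tendsto (fun q:ℝ => (q:ℂ)^k) _ (nhds (1^k))))
      simpa using h
    have h := (hbase.pow m).mul h2
    simpa using h
  exact hnum.div hden (Nat.cast_ne_zero.2 hr)

lemma char_eq (m n : ℕ) (hn : 0 < n) (q : ℝ) (hq : 1 < q) :
    oevenDenX (fun h : Fin n => ((q : ℂ)) ^ ((h : ℕ))) ≠ 0 ∧
    oevenChar (fun _ => (m : ℤ)) (fun h : Fin n => ((q : ℂ)) ^ ((h : ℕ))) =
      2 * ∏ i : Fin n, ∏ j : Fin n, (if i < j then
        (∑ k ∈ range ((m + (n-1-(j:ℕ))) + (m + (n-1-(i:ℕ)))), (q:ℂ)^k) /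
          ((q:ℂ)^m * ∑ k ∈ range ((n-1-(j:ℕ)) + (n-1-(i:ℕ))), (q:ℂ)^k)
        else 1) := by
  have hq0 : (0:ℝ) < q := lt_trans one_pos hq
  have hQ0 : ((q:ℂ)) ≠ 0 := by exact_mod_cast hq0.ne'
  have hQ1 : ((q:ℂ)) ≠ 1 := by exact_mod_cast hq.ne'
  have hgs : ∀ r : ℕ, r ≠ 0 → (∑ k ∈ range r, (q:ℂ)^k) ≠ 0 := by
    intro r hr
    have hpos : (0:ℝ) < ∑ k ∈ range r, q^k :=
      Finset.sum_pos (fun k _ => pow_pos hq0 k) (Finset.nonempty_range_iff.2 hr)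
    have hcast : ((∑ k ∈ range r, q^k : ℝ) : ℂ) = ∑ k ∈ range r, (q:ℂ)^k := by
      push_cast; ring
    rw [← hcast]
    exact_mod_cast hpos.ne'
  have hWne : ∀ b c : ℕ, c < b →
      ((q:ℂ)^c + ((q:ℂ)^c)⁻¹) - ((q:ℂ)^b + ((q:ℂ)^b)⁻¹) ≠ 0 := by
    intro b c hcb
    have hlt : q^c + (q^c)⁻¹ < q^b + (q^b)⁻¹ :=
      add_inv_lt_add_inv (one_le_pow₀ hq.le) (pow_lt_pow_right₀ hq hcb)
    have hcast : ((q^c + (q^c)⁻¹ : ℝ) : ℂ) - ((q^b + (q^b)⁻¹ : ℝ) : ℂ) ≠ 0 := by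
      rw [sub_ne_zero]
      exact_mod_cast hlt.ne
    convert hcast using 2 <;> push_cast <;> ring
  have hden : Matrix.det (Matrix.of fun h t : Fin n =>
      ((q:ℂ) ^ (h:ℕ)) ^ ((n : ℤ) - 1 - ((t : ℕ) : ℤ)) +
        ((q:ℂ) ^ (h:ℕ)) ^ (-((n : ℤ) - 1 - ((t : ℕ) : ℤ)))) =
      2 * ∏ i : Fin n, ∏ j ∈ Finset.Ioi i,
        (((q:ℂ)^(n-1-(j:ℕ)) + ((q:ℂ)^(n-1-(j:ℕ)))⁻¹) -
          ((q:ℂ)^(n-1-(i:ℕ)) + ((q:ℂ)^(n-1-(i:ℕ)))⁻¹)) :=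
    det_qpow hn (q:ℂ) hQ0 (fun t => (n:ℤ) - 1 - ((t:ℕ):ℤ))
      (fun t => n - 1 - (t:ℕ)) (fun t => by
        show (n:ℤ) - 1 - ((t:ℕ):ℤ) = ((n - 1 - (t:ℕ) : ℕ) : ℤ)
        have := t.isLt; omega)
  have hnum : Matrix.det (Matrix.of fun h t : Fin n =>
      ((q:ℂ) ^ (h:ℕ)) ^ ((m:ℤ) + (n : ℤ) - 1 - ((t : ℕ) : ℤ)) +
        ((q:ℂ) ^ (h:ℕ)) ^ (-((m:ℤ) + (n : ℤ) - 1 - ((t : ℕ) : ℤ)))) =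
      2 * ∏ i : Fin n, ∏ j ∈ Finset.Ioi i,
        (((q:ℂ)^(m+(n-1-(j:ℕ))) + ((q:ℂ)^(m+(n-1-(j:ℕ))))⁻¹) -
          ((q:ℂ)^(m+(n-1-(i:ℕ))) + ((q:ℂ)^(m+(n-1-(i:ℕ))))⁻¹)) :=
    det_qpow hn (q:ℂ) hQ0 (fun t => (m:ℤ) + (n:ℤ) - 1 - ((t:ℕ):ℤ))
      (fun t => m + (n - 1 - (t:ℕ))) (fun t => by
        show (m:ℤ) + (n:ℤ) - 1 - ((t:ℕ):ℤ) = ((m + (n - 1 - (t:ℕ)) : ℕ) : ℤ)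
        have := t.isLt; omega)
  have hPbne : (∏ i : Fin n, ∏ j ∈ Finset.Ioi i,
      (((q:ℂ)^(n-1-(j:ℕ)) + ((q:ℂ)^(n-1-(j:ℕ)))⁻¹) -
        ((q:ℂ)^(n-1-(i:ℕ)) + ((q:ℂ)^(n-1-(i:ℕ)))⁻¹))) ≠ 0 := by
    rw [Finset.prod_ne_zero_iff]
    intro i _
    rw [Finset.prod_ne_zero_iff]
    intro j hj
    have hij : i < j := Finset.mem_Ioi.1 hj
    have hj' : (j:ℕ) < n := j.isLt
    have hij' : (i:ℕ) < (j:ℕ) := hij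
    exact hWne (n-1-(i:ℕ)) (n-1-(j:ℕ)) (by omega)
  constructor
  · simp only [oevenDenX]
    rw [hden]
    exact mul_ne_zero two_ne_zero hPbne
  · simp only [oevenChar]
    rw [hnum, hden, mul_div_assoc, mul_div_mul_left _ _ (two_ne_zero)]
    congr 1
    rw [← Finset.prod_div_distrib]
    refine Finset.prod_congr rfl (fun i _ => ?_)
    rw [← Finset.prod_div_distrib, ← Finset.prod_filter, Finset.filter_lt_eq_Ioi]
    refine Finset.prod_congr rfl (fun j hj => ?_)
    have hlt : i < j := Finset.mem_Ioi.1 hj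
    have hij : (i:ℕ) < (j:ℕ) := hlt
    have hjn : (j:ℕ) < n := j.isLt
    have hbe : n-1-(i:ℕ) = (n-1-(j:ℕ)) + ((j:ℕ)-(i:ℕ)) := by omega
    have h := pair_ratio (q:ℂ) hQ0 hQ1 m (n-1-(j:ℕ)) ((j:ℕ)-(i:ℕ))
      (by rw [← hbe]; exact hWne (n-1-(i:ℕ)) (n-1-(j:ℕ)) (by omega))
      (by rw [← hbe]; exact hgs _ (by omega))
    rw [← hbe] at h
    exact h

/-- For `q > 1`, the denominator determinant of the even orthogonal character
at the variables `1, q, q², …, q^{n-1}` is nonzero, and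
`o^even_{(m^n)}(1,q,…,q^{n-1})` tends, as `q → 1⁺`, to
`2 ∏_{1≤h<t≤n} (2m+2n-h-t)/(2n-h-t)`. -/
theorem oeven_q_powers_limit (m n : ℕ) :
    (∀ q : ℝ, 1 < q → oevenDenX (fun h : Fin n => ((q : ℂ)) ^ ((h : ℕ))) ≠ 0) ∧
      Tendsto
        (fun q : ℝ => oevenChar (fun _ => (m : ℤ)) (fun h : Fin n => ((q : ℂ)) ^ ((h : ℕ))))
        (nhdsWithin (1 : ℝ) (Set.Ioi 1))
        (nhds
          (2 * ∏ h : Fin n, ∏ t : Fin n,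
            if h < t then
              (((2 * m + 2 * n : ℤ) - ((h : ℕ) + 1) - ((t : ℕ) + 1) : ℤ) : ℂ) /
                (((2 * n : ℤ) - ((h : ℕ) + 1) - ((t : ℕ) + 1) : ℤ) : ℂ)
            else 1)) := by
  rcases Nat.eq_zero_or_pos n with hn | hn
  · subst hn
    constructor
    · intro q hq
      simp [oevenDenX, Matrix.det_isEmpty]
    · have hconst : ∀ q : ℝ,
          oevenChar (fun _ => (m : ℤ)) (fun h : Fin 0 => ((q : ℂ)) ^ ((h : ℕ))) = 2 := by
        intro q
        simp [oevenChar, Matrix.det_isEmpty]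
      simp only [hconst, Finset.univ_eq_empty, Finset.prod_empty, mul_one]
      exact tendsto_const_nhds
  · constructor
    · intro q hq
      exact (char_eq m n hn q hq).1
    · have hH : Tendsto (fun q : ℝ =>
          2 * ∏ i : Fin n, ∏ j : Fin n, (if i < j then
            (∑ k ∈ range ((m + (n-1-(j:ℕ))) + (m + (n-1-(i:ℕ)))), (q:ℂ)^k) /
              ((q:ℂ)^m * ∑ k ∈ range ((n-1-(j:ℕ)) + (n-1-(i:ℕ))), (q:ℂ)^k)
            else 1))
          (nhdsWithin (1 : ℝ) (Set.Ioi 1))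
          (nhds (2 * ∏ i : Fin n, ∏ j : Fin n, (if i < j then
            ((((m + (n-1-(j:ℕ))) + (m + (n-1-(i:ℕ))) : ℕ) : ℂ) /
              (((n-1-(j:ℕ)) + (n-1-(i:ℕ)) : ℕ) : ℂ))
            else 1))) := by
        refine tendsto_const_nhds.mul (tendsto_finset_prod _ (fun i _ =>
          tendsto_finset_prod _ (fun j _ => ?_)))
        by_cases hlt : i < j
        · simp only [if_pos hlt]
          have hij : (i:ℕ) < (j:ℕ) := hlt
          have hjn : (j:ℕ) < n := j.isLt
          exact G_tendsto m _ _ (by omega)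
        · simp only [if_neg hlt]
          exact tendsto_const_nhds
      have hvals : (2 * ∏ i : Fin n, ∏ j : Fin n, (if i < j then
            ((((m + (n-1-(j:ℕ))) + (m + (n-1-(i:ℕ))) : ℕ) : ℂ) /
              (((n-1-(j:ℕ)) + (n-1-(i:ℕ)) : ℕ) : ℂ))
            else 1)) =
          (2 * ∏ h : Fin n, ∏ t : Fin n,
            if h < t then
              (((2 * m + 2 * n : ℤ) - ((h : ℕ) + 1) - ((t : ℕ) + 1) : ℤ) : ℂ) /
                (((2 * n : ℤ) - ((h : ℕ) + 1) - ((t : ℕ) + 1) : ℤ) : ℂ)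
            else 1) := by
        congr 1
        refine Finset.prod_congr rfl (fun i _ => Finset.prod_congr rfl (fun j _ => ?_))
        by_cases hlt : i < j
        · rw [if_pos hlt, if_pos hlt]
          have hij : (i:ℕ) < (j:ℕ) := hlt
          have hjn : (j:ℕ) < n := j.isLt
          congr 1
          · rw [show (((m + (n-1-(j:ℕ))) + (m + (n-1-(i:ℕ))) : ℕ) : ℂ)
                = (((((m + (n-1-(j:ℕ))) + (m + (n-1-(i:ℕ))) : ℕ) : ℤ)) : ℂ) by push_cast; ring]
            congr 1
            omega
          · rw [show ((((n-1-(j:ℕ)) + (n-1-(i:ℕ)) : ℕ)) : ℂ)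
                = ((((((n-1-(j:ℕ)) + (n-1-(i:ℕ))) : ℕ) : ℤ)) : ℂ) by push_cast; ring]
            congr 1
            omega
        · rw [if_neg hlt, if_neg hlt]
      rw [← hvals]
      refine hH.congr' ?_
      filter_upwards [self_mem_nhdsWithin] with q hq
      exact ((char_eq m n hn q hq).2).symm
end
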